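/- arXiv:1809.01544 — 5 statements merged into one kernel-verified Lean document; each statement's English description precedes it below -/
import Mathlib

section
/- For smooth vector fields u, K₁, K₂ on ℝ³, if K₁ and K₂ are invariants (𝔇ₜKᵢ = 0), then the cross product satisfies 𝔇ₜ(K₁ × K₂) = −(∇·u)(K₁ × K₂) + K₁ × (s·K₂) − K₂ × (s·K₁), where s = ∇u + (∇u)ᵀ and 𝔇ₜ on a vector field V is ∂ₜV + (u·∇)V − (V·∇)u. -/
open scoped BigOperators

noncomputable section

/-- Three-dimensional space as `Fin 3 → ℝ`. -/
abbrev V3 : Type := Fin 3 → ℝ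

/-- Spatial partial derivative `∂ᵢ` of a time-dependent scalar field. -/
def pd (i : Fin 3) (f : ℝ → V3 → ℝ) (t : ℝ) (x : V3) : ℝ :=
  fderiv ℝ (f t) x (Pi.single i 1)

/-- Time derivative `∂ₜ` of a time-dependent scalar field. -/
def pt (f : ℝ → V3 → ℝ) (t : ℝ) (x : V3) : ℝ :=
  deriv (fun s => f s x) t

/-- The `i`-th component of a time-dependent vector field. -/
def comp (K : ℝ → V3 → V3) (i : Fin 3) : ℝ → V3 → ℝ := fun t x => K t x i

/-- Spatial divergence `∇·K`. -/
def div3 (K : ℝ → V3 → V3) (t : ℝ) (x : V3) : ℝ :=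
  ∑ i, pd i (comp K i) t x

/-- Spatial gradient `∇f`. -/
def grad3 (f : ℝ → V3 → ℝ) (t : ℝ) (x : V3) : V3 :=
  fun i => pd i f t x

/-- Spatial curl `∇×K`. -/
def curl3 (K : ℝ → V3 → V3) (t : ℝ) (x : V3) : V3 :=
  ![pd 1 (comp K 2) t x - pd 2 (comp K 1) t x,
    pd 2 (comp K 0) t x - pd 0 (comp K 2) t x,
    pd 0 (comp K 1) t x - pd 1 (comp K 0) t x]

/-- Dot product on `ℝ³`. -/
def dot3 (a b : V3) : ℝ := ∑ i, a i * b i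

/-- Cross product on `ℝ³`. -/
def cross3 (a b : V3) : V3 :=
  ![a 1 * b 2 - a 2 * b 1, a 2 * b 0 - a 0 * b 2, a 0 * b 1 - a 1 * b 0]

/-- Material derivative `∂ₜ + u·∇` on scalar fields. -/
def matD (u : ℝ → V3 → V3) (f : ℝ → V3 → ℝ) (t : ℝ) (x : V3) : ℝ :=
  pt f t x + ∑ i, u t x i * pd i f t x

/-- Advective Lie derivative `𝔇ₜK = ∂ₜK + (u·∇)K − (K·∇)u` on vector fields. -/
def DtVec (u K : ℝ → V3 → V3) (t : ℝ) (x : V3) : V3 :=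
  fun i => pt (comp K i) t x + ∑ j, u t x j * pd j (comp K i) t x
    - ∑ j, K t x j * pd j (comp u i) t x

/-- Symmetric derivative of `u`: `sᵢⱼ = ∂ᵢuⱼ + ∂ⱼuᵢ`. -/
def symmDer (u : ℝ → V3 → V3) (t : ℝ) (x : V3) (i j : Fin 3) : ℝ :=
  pd i (comp u j) t x + pd j (comp u i) t x

/-- Smoothness of a time-dependent scalar field. -/
def SmoothS (f : ℝ → V3 → ℝ) : Prop := ContDiff ℝ (⊤ : ℕ∞) (fun p : ℝ × V3 => f p.1 p.2)

/-- Smoothness of a time-dependent vector field. -/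
def SmoothVec (K : ℝ → V3 → V3) : Prop := ContDiff ℝ (⊤ : ℕ∞) (fun p : ℝ × V3 => K p.1 p.2)

lemma smoothS_comp {K : ℝ → V3 → V3} (hK : SmoothVec K) (i : Fin 3) : SmoothS (comp K i) :=
  contDiff_pi.1 hK i

lemma diffT {f : ℝ → V3 → ℝ} (hf : SmoothS f) (x : V3) :
    Differentiable ℝ (fun s => f s x) :=
  (hf.comp (ContDiff.prodMk contDiff_id contDiff_const)).differentiable (by simp)

lemma diffX {f : ℝ → V3 → ℝ} (hf : SmoothS f) (t : ℝ) :
    Differentiable ℝ (f t) :=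
  (hf.comp (ContDiff.prodMk contDiff_const contDiff_id)).differentiable (by simp)

lemma pt_mul {f g : ℝ → V3 → ℝ} (hf : SmoothS f) (hg : SmoothS g) (t : ℝ) (x : V3) :
    pt (fun t x => f t x * g t x) t x = pt f t x * g t x + f t x * pt g t x :=
  deriv_mul (diffT hf x t) (diffT hg x t)

lemma pt_sub {f g : ℝ → V3 → ℝ} (hf : SmoothS f) (hg : SmoothS g) (t : ℝ) (x : V3) :
    pt (fun t x => f t x - g t x) t x = pt f t x - pt g t x :=
  deriv_sub (diffT hf x t) (diffT hg x t)

lemma pd_mul {f g : ℝ → V3 → ℝ} (i : Fin 3) (hf : SmoothS f) (hg : SmoothS g) (t : ℝ) (x : V3) :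
    pd i (fun t x => f t x * g t x) t x = pd i f t x * g t x + f t x * pd i g t x := by
  simp only [pd]
  rw [fderiv_fun_mul (diffX hf t x) (diffX hg t x)]
  simp only [ContinuousLinearMap.add_apply, ContinuousLinearMap.smul_apply, smul_eq_mul]
  ring

lemma pd_sub {f g : ℝ → V3 → ℝ} (i : Fin 3) (hf : SmoothS f) (hg : SmoothS g) (t : ℝ) (x : V3) :
    pd i (fun t x => f t x - g t x) t x = pd i f t x - pd i g t x := by
  simp only [pd]
  rw [fderiv_fun_sub (diffX hf t x) (diffX hg t x)]
  simp

lemma smoothS_mul {f g : ℝ → V3 → ℝ} (hf : SmoothS f) (hg : SmoothS g) :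
    SmoothS (fun t x => f t x * g t x) := ContDiff.mul hf hg

lemma pt_cross_aux {a b c d : ℝ → V3 → ℝ} (ha : SmoothS a) (hb : SmoothS b)
    (hc : SmoothS c) (hd : SmoothS d) (t : ℝ) (x : V3) :
    pt (fun t x => a t x * b t x - c t x * d t x) t x
      = pt a t x * b t x + a t x * pt b t x - pt c t x * d t x - c t x * pt d t x := by
  rw [pt_sub (smoothS_mul ha hb) (smoothS_mul hc hd), pt_mul ha hb, pt_mul hc hd]; ring

lemma pd_cross_aux {a b c d : ℝ → V3 → ℝ} (j : Fin 3) (ha : SmoothS a) (hb : SmoothS b)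
    (hc : SmoothS c) (hd : SmoothS d) (t : ℝ) (x : V3) :
    pd j (fun t x => a t x * b t x - c t x * d t x) t x
      = pd j a t x * b t x + a t x * pd j b t x - pd j c t x * d t x - c t x * pd j d t x := by
  rw [pd_sub j (smoothS_mul ha hb) (smoothS_mul hc hd), pd_mul j ha hb, pd_mul j hc hd]; ring

/-- Advection identity for the cross product of two vector invariants. -/
theorem cross_product_advection
    (u K₁ K₂ : ℝ → V3 → V3)
    (hu : SmoothVec u) (hK₁ : SmoothVec K₁) (hK₂ : SmoothVec K₂)
    (hinv₁ : ∀ t x, DtVec u K₁ t x = 0)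
    (hinv₂ : ∀ t x, DtVec u K₂ t x = 0) :
    ∀ t x, DtVec u (fun t x => cross3 (K₁ t x) (K₂ t x)) t x
      = -(div3 u t x) • cross3 (K₁ t x) (K₂ t x)
        + cross3 (K₁ t x) (fun i => ∑ j, symmDer u t x i j * K₂ t x j)
        - cross3 (K₂ t x) (fun i => ∑ j, symmDer u t x i j * K₁ t x j) := by
  intro t x
  have hu' : ∀ i : Fin 3, SmoothS (comp u i) := fun i => smoothS_comp hu i
  have h1 : ∀ i : Fin 3, SmoothS (comp K₁ i) := fun i => smoothS_comp hK₁ i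
  have h2 : ∀ i : Fin 3, SmoothS (comp K₂ i) := fun i => smoothS_comp hK₂ i
  have e1 : ∀ i : Fin 3, pt (comp K₁ i) t x
      = ∑ j, K₁ t x j * pd j (comp u i) t x - ∑ j, u t x j * pd j (comp K₁ i) t x := by
    intro i
    have h := congrFun (hinv₁ t x) i
    simp only [DtVec, Pi.zero_apply] at h
    linarith
  have e2 : ∀ i : Fin 3, pt (comp K₂ i) t x
      = ∑ j, K₂ t x j * pd j (comp u i) t x - ∑ j, u t x j * pd j (comp K₂ i) t x := by
    intro i
    have h := congrFun (hinv₂ t x) i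
    simp only [DtVec, Pi.zero_apply] at h
    linarith
  have c0 : comp (fun t x => cross3 (K₁ t x) (K₂ t x)) 0
      = fun t x => comp K₁ 1 t x * comp K₂ 2 t x - comp K₁ 2 t x * comp K₂ 1 t x := by
    funext t x; simp [comp, cross3]
  have c1 : comp (fun t x => cross3 (K₁ t x) (K₂ t x)) 1
      = fun t x => comp K₁ 2 t x * comp K₂ 0 t x - comp K₁ 0 t x * comp K₂ 2 t x := by
    funext t x; simp [comp, cross3]
  have c2 : comp (fun t x => cross3 (K₁ t x) (K₂ t x)) 2
      = fun t x => comp K₁ 0 t x * comp K₂ 1 t x - comp K₁ 1 t x * comp K₂ 0 t x := by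
    funext t x; simp [comp, cross3]
  funext i
  simp only [DtVec]
  fin_cases i
  · beta_reduce
    simp only [Fin.zero_eta, Fin.mk_one, Fin.reduceFinMk]
    rw [c0]
    simp only [Fin.sum_univ_three]
    rw [pt_cross_aux (h1 1) (h2 2) (h1 2) (h2 1) t x,
        pd_cross_aux 0 (h1 1) (h2 2) (h1 2) (h2 1) t x,
        pd_cross_aux 1 (h1 1) (h2 2) (h1 2) (h2 1) t x,
        pd_cross_aux 2 (h1 1) (h2 2) (h1 2) (h2 1) t x,
        e1 1, e1 2, e2 1, e2 2]
    simp only [comp, div3, symmDer, cross3, Fin.sum_univ_three, Pi.add_apply, Pi.sub_apply,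
      Pi.smul_apply, smul_eq_mul, Pi.neg_apply, Matrix.cons_val_zero, Matrix.cons_val_one,
      Matrix.head_cons, Matrix.cons_val_two, Matrix.tail_cons, neg_mul]
    ring
  · beta_reduce
    simp only [Fin.zero_eta, Fin.mk_one, Fin.reduceFinMk]
    rw [c1]
    simp only [Fin.sum_univ_three]
    rw [pt_cross_aux (h1 2) (h2 0) (h1 0) (h2 2) t x,
        pd_cross_aux 0 (h1 2) (h2 0) (h1 0) (h2 2) t x,
        pd_cross_aux 1 (h1 2) (h2 0) (h1 0) (h2 2) t x,
        pd_cross_aux 2 (h1 2) (h2 0) (h1 0) (h2 2) t x,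
        e1 0, e1 2, e2 0, e2 2]
    simp only [comp, div3, symmDer, cross3, Fin.sum_univ_three, Pi.add_apply, Pi.sub_apply,
      Pi.smul_apply, smul_eq_mul, Pi.neg_apply, Matrix.cons_val_zero, Matrix.cons_val_one,
      Matrix.head_cons, Matrix.cons_val_two, Matrix.tail_cons, neg_mul]
    ring
  · beta_reduce
    simp only [Fin.zero_eta, Fin.mk_one, Fin.reduceFinMk]
    rw [c2]
    simp only [Fin.sum_univ_three]
    rw [pt_cross_aux (h1 0) (h2 1) (h1 1) (h2 0) t x,
        pd_cross_aux 0 (h1 0) (h2 1) (h1 1) (h2 0) t x,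
        pd_cross_aux 1 (h1 0) (h2 1) (h1 1) (h2 0) t x,
        pd_cross_aux 2 (h1 0) (h2 1) (h1 1) (h2 0) t x,
        e1 0, e1 1, e2 0, e2 1]
    simp only [comp, div3, symmDer, cross3, Fin.sum_univ_three, Pi.add_apply, Pi.sub_apply,
      Pi.smul_apply, smul_eq_mul, Pi.neg_apply, Matrix.cons_val_zero, Matrix.cons_val_one,
      Matrix.head_cons, Matrix.cons_val_two, Matrix.tail_cons, neg_mul]
    ring
end
end

section
/- For a smooth vector field u and smooth vector field K on ℝ³ with 𝔇ₜK = ∂ₜK + (u·∇)K − (K·∇)u = 0, the divergence satisfies (∂ₜ + u·∇)(∇·K) = K·∇(∇·u). -/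
open scoped BigOperators

noncomputable section

namespace DivAdvAux

abbrev P : Type := ℝ × V3

/-- Directional derivative of a function on space-time. -/
def Dv (v : P) (F : P → ℝ) (p : P) : ℝ := fderiv ℝ F p v

/-- Spatial directions. -/
def ee (i : Fin 3) : P := ((0 : ℝ), Pi.single i 1)

/-- Time direction. -/
def et : P := ((1 : ℝ), (0 : V3))

lemma smooth_Dv {F : P → ℝ} (hF : ContDiff ℝ (⊤ : ℕ∞) F) (v : P) :
    ContDiff ℝ (⊤ : ℕ∞) (Dv v F) := by
  have h1 : ContDiff ℝ (⊤ : ℕ∞) (fderiv ℝ F) := hF.fderiv_right (by simp)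
  exact (ContinuousLinearMap.apply ℝ ℝ v).contDiff.comp h1

lemma Dv_comm {F : P → ℝ} (hF : ContDiff ℝ (⊤ : ℕ∞) F) (v w : P) (p : P) :
    Dv w (Dv v F) p = Dv v (Dv w F) p := by
  have hd : ContDiff ℝ (⊤ : ℕ∞) (fderiv ℝ F) := hF.fderiv_right (by simp)
  have hfd : ∀ z : P, fderiv ℝ (Dv z F) p = (fderiv ℝ (fderiv ℝ F) p).flip z := by
    intro z
    have h := fderiv_clm_apply (c := fderiv ℝ F) (u := fun _ : P => z)
      (hd.differentiable (by simp) p) (differentiableAt_const z)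
    rw [show Dv z F = fun y => fderiv ℝ F y z from rfl]
    simpa [fderiv_const] using h
  have hsymm : IsSymmSndFDerivAt ℝ F p :=
    (hF.contDiffAt).isSymmSndFDerivAt (by rw [minSmoothness_of_isRCLikeNormedField]; exact WithTop.coe_le_coe.mpr (le_top : (2 : ℕ∞) ≤ ⊤))
  have h1 : Dv w (Dv v F) p = fderiv ℝ (fderiv ℝ F) p w v := by
    rw [Dv, hfd v]; rfl
  have h2 : Dv v (Dv w F) p = fderiv ℝ (fderiv ℝ F) p v w := by
    rw [Dv, hfd w]; rfl
  rw [h1, h2, hsymm.eq]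

lemma Dv_sum {g : Fin 3 → P → ℝ} (hg : ∀ i, Differentiable ℝ (g i)) (v : P) (p : P) :
    Dv v (fun q => ∑ i, g i q) p = ∑ i, Dv v (g i) p := by
  unfold Dv
  rw [fderiv_fun_sum fun i _ => (hg i) p]
  simp

lemma Dv_sub {f g : P → ℝ} (hf : Differentiable ℝ f) (hg : Differentiable ℝ g)
    (v : P) (p : P) :
    Dv v (fun q => f q - g q) p = Dv v f p - Dv v g p := by
  unfold Dv
  rw [fderiv_fun_sub (hf p) (hg p)]
  simp

lemma Dv_mul {f g : P → ℝ} (hf : Differentiable ℝ f) (hg : Differentiable ℝ g)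
    (v : P) (p : P) :
    Dv v (fun q => f q * g q) p = Dv v f p * g p + f p * Dv v g p := by
  unfold Dv
  rw [fderiv_fun_mul (hf p) (hg p)]
  simp only [ContinuousLinearMap.add_apply, ContinuousLinearMap.smul_apply, smul_eq_mul]
  ring

lemma pd_eq {f : ℝ → V3 → ℝ} {g : P → ℝ} (hg : ContDiff ℝ (⊤ : ℕ∞) g)
    (hfg : ∀ t x, f t x = g (t, x)) (i : Fin 3) (t : ℝ) (x : V3) :
    pd i f t x = Dv (ee i) g (t, x) := by
  have hft : f t = fun y => g (t, y) := funext fun y => hfg t y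
  have hL : HasFDerivAt (fun y : V3 => ((t : ℝ), y))
      ((0 : V3 →L[ℝ] ℝ).prod (ContinuousLinearMap.id ℝ V3)) x :=
    HasFDerivAt.prodMk (hasFDerivAt_const t x) (hasFDerivAt_id x)
  have hg' : HasFDerivAt g (fderiv ℝ g (t, x)) (t, x) :=
    (hg.differentiable (by simp) (t, x)).hasFDerivAt
  have h2 : HasFDerivAt (fun y : V3 => g (t, y))
      ((fderiv ℝ g (t, x)).comp
        ((0 : V3 →L[ℝ] ℝ).prod (ContinuousLinearMap.id ℝ V3))) x := hg'.comp x hL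
  rw [pd, hft, h2.fderiv]
  simp [Dv, ee]

lemma pt_eq {f : ℝ → V3 → ℝ} {g : P → ℝ} (hg : ContDiff ℝ (⊤ : ℕ∞) g)
    (hfg : ∀ t x, f t x = g (t, x)) (t : ℝ) (x : V3) :
    pt f t x = Dv et g (t, x) := by
  have hft : (fun s => f s x) = fun s => g (s, x) := funext fun s => hfg s x
  have hL : HasDerivAt (fun s : ℝ => ((s : ℝ), x)) ((1 : ℝ), (0 : V3)) t :=
    HasDerivAt.prodMk (hasDerivAt_id t) (hasDerivAt_const t x)
  have hg' : HasFDerivAt g (fderiv ℝ g (t, x)) (t, x) :=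
    (hg.differentiable (by simp) (t, x)).hasFDerivAt
  have h2 : HasDerivAt (fun s : ℝ => g (s, x))
      (fderiv ℝ g (t, x) ((1 : ℝ), (0 : V3))) t := hg'.comp_hasDerivAt t hL
  rw [pt, hft, h2.deriv]
  rfl

end DivAdvAux

open DivAdvAux

/-- Advection identity for the divergence of a vector invariant. -/
theorem divergence_advection
    (u K : ℝ → V3 → V3)
    (hu : SmoothVec u) (hK : SmoothVec K)
    (hinv : ∀ t x, DtVec u K t x = 0) :
    ∀ t x, matD u (fun t x => div3 K t x) t x
      = ∑ i, K t x i * pd i (fun t x => div3 u t x) t x := by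
  intro t x
  classical
  have hA : ∀ i, ContDiff ℝ (⊤ : ℕ∞) (fun p : P => K p.1 p.2 i) := fun i => contDiff_pi.1 hK i
  have hB : ∀ i, ContDiff ℝ (⊤ : ℕ∞) (fun p : P => u p.1 p.2 i) := fun i => contDiff_pi.1 hu i
  have hAd : ∀ i, Differentiable ℝ (fun p : P => K p.1 p.2 i) :=
    fun i => (hA i).differentiable (by simp)
  have hBd : ∀ i, Differentiable ℝ (fun p : P => u p.1 p.2 i) :=
    fun i => (hB i).differentiable (by simp)
  have hDAd : ∀ (v : P) i, Differentiable ℝ (Dv v (fun p : P => K p.1 p.2 i)) :=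
    fun v i => (smooth_Dv (hA i) v).differentiable (by simp)
  have hDBd : ∀ (v : P) i, Differentiable ℝ (Dv v (fun p : P => u p.1 p.2 i)) :=
    fun v i => (smooth_Dv (hB i) v).differentiable (by simp)
  have hgK : ContDiff ℝ (⊤ : ℕ∞) (fun p : P => ∑ i, Dv (ee i) (fun q : P => K q.1 q.2 i) p) :=
    ContDiff.sum fun i _ => smooth_Dv (hA i) (ee i)
  have hgU : ContDiff ℝ (⊤ : ℕ∞) (fun p : P => ∑ i, Dv (ee i) (fun q : P => u q.1 q.2 i) p) :=
    ContDiff.sum fun i _ => smooth_Dv (hB i) (ee i)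
  have hdivK : ∀ s y, div3 K s y = ∑ i, Dv (ee i) (fun q : P => K q.1 q.2 i) (s, y) := by
    intro s y
    unfold div3
    exact Finset.sum_congr rfl fun i _ => pd_eq (hA i) (fun _ _ => rfl) i s y
  have hdivU : ∀ s y, div3 u s y = ∑ i, Dv (ee i) (fun q : P => u q.1 q.2 i) (s, y) := by
    intro s y
    unfold div3
    exact Finset.sum_congr rfl fun i _ => pd_eq (hB i) (fun _ _ => rfl) i s y
  -- the invariance equation in uncurried form
  have hinv' : ∀ i, Dv et (fun q : P => K q.1 q.2 i)
      = fun p : P => (∑ j, K p.1 p.2 j * Dv (ee j) (fun q : P => u q.1 q.2 i) p)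
        - ∑ j, u p.1 p.2 j * Dv (ee j) (fun q : P => K q.1 q.2 i) p := by
    intro i
    funext p
    have h0 := congrFun (hinv p.1 p.2) i
    simp only [DtVec, Pi.zero_apply] at h0
    rw [pt_eq (f := comp K i) (hA i) (fun _ _ => rfl) p.1 p.2] at h0
    have hpdK : ∀ j, pd j (comp K i) p.1 p.2 = Dv (ee j) (fun q : P => K q.1 q.2 i) p :=
      fun j => pd_eq (hA i) (fun _ _ => rfl) j p.1 p.2
    have hpdu : ∀ j, pd j (comp u i) p.1 p.2 = Dv (ee j) (fun q : P => u q.1 q.2 i) p :=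
      fun j => pd_eq (hB i) (fun _ _ => rfl) j p.1 p.2
    simp only [hpdK, hpdu] at h0
    have hp : (p.1, p.2) = p := rfl
    rw [hp] at h0
    linarith [h0]
  have e1 : matD u (fun t x => div3 K t x) t x
      = Dv et (fun p : P => ∑ i, Dv (ee i) (fun q : P => K q.1 q.2 i) p) (t, x)
        + ∑ j, u t x j
            * Dv (ee j) (fun p : P => ∑ i, Dv (ee i) (fun q : P => K q.1 q.2 i) p) (t, x) := by
    rw [matD, pt_eq hgK hdivK t x]
    congr 1
    exact Finset.sum_congr rfl fun j _ => by rw [pd_eq hgK hdivK j t x]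
  have e2 : Dv et (fun p : P => ∑ i, Dv (ee i) (fun q : P => K q.1 q.2 i) p) (t, x)
      = ∑ i, Dv (ee i) (Dv et (fun q : P => K q.1 q.2 i)) (t, x) := by
    rw [Dv_sum (fun i => hDAd (ee i) i) et (t, x)]
    exact Finset.sum_congr rfl fun i _ => Dv_comm (hA i) (ee i) et (t, x)
  have e3 : ∀ i, Dv (ee i) (Dv et (fun q : P => K q.1 q.2 i)) (t, x)
      = (∑ j, (Dv (ee i) (fun q : P => K q.1 q.2 j) (t, x)
              * Dv (ee j) (fun q : P => u q.1 q.2 i) (t, x)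
            + K t x j * Dv (ee i) (Dv (ee j) (fun q : P => u q.1 q.2 i)) (t, x)))
        - ∑ j, (Dv (ee i) (fun q : P => u q.1 q.2 j) (t, x)
              * Dv (ee j) (fun q : P => K q.1 q.2 i) (t, x)
            + u t x j * Dv (ee i) (Dv (ee j) (fun q : P => K q.1 q.2 i)) (t, x)) := by
    intro i
    rw [hinv' i]
    rw [Dv_sub
      (f := fun p : P => ∑ j, K p.1 p.2 j * Dv (ee j) (fun q : P => u q.1 q.2 i) p)
      (g := fun p : P => ∑ j, u p.1 p.2 j * Dv (ee j) (fun q : P => K q.1 q.2 i) p)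
      (Differentiable.fun_sum fun j _ => (hAd j).fun_mul (hDBd (ee j) i))
      (Differentiable.fun_sum fun j _ => (hBd j).fun_mul (hDAd (ee j) i))
      (ee i) (t, x)]
    rw [Dv_sum (g := fun j p => K p.1 p.2 j * Dv (ee j) (fun q : P => u q.1 q.2 i) p)
      (fun j => (hAd j).mul (hDBd (ee j) i)) (ee i) (t, x)]
    rw [Dv_sum (g := fun j p => u p.1 p.2 j * Dv (ee j) (fun q : P => K q.1 q.2 i) p)
      (fun j => (hBd j).mul (hDAd (ee j) i)) (ee i) (t, x)]
    congr 1
    · exact Finset.sum_congr rfl fun j _ => by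
        rw [Dv_mul (hAd j) (hDBd (ee j) i) (ee i) (t, x)]
    · exact Finset.sum_congr rfl fun j _ => by
        rw [Dv_mul (hBd j) (hDAd (ee j) i) (ee i) (t, x)]
  have e4 : ∀ j : Fin 3,
      Dv (ee j) (fun p : P => ∑ i, Dv (ee i) (fun q : P => K q.1 q.2 i) p) (t, x)
      = ∑ i, Dv (ee j) (Dv (ee i) (fun q : P => K q.1 q.2 i)) (t, x) :=
    fun j => Dv_sum (fun i => hDAd (ee i) i) (ee j) (t, x)
  have e4U : ∀ j : Fin 3,
      Dv (ee j) (fun p : P => ∑ i, Dv (ee i) (fun q : P => u q.1 q.2 i) p) (t, x)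
      = ∑ i, Dv (ee j) (Dv (ee i) (fun q : P => u q.1 q.2 i)) (t, x) :=
    fun j => Dv_sum (fun i => hDBd (ee i) i) (ee j) (t, x)
  have e5 : ∀ i : Fin 3, pd i (fun t x => div3 u t x) t x
      = Dv (ee i) (fun p : P => ∑ k, Dv (ee k) (fun q : P => u q.1 q.2 k) p) (t, x) :=
    fun i => pd_eq hgU hdivU i t x
  rw [e1, e2]
  simp only [e3, e4, e4U, e5]
  -- now a pure algebraic identity about the atoms
  have key1 : (∑ i, ∑ j, Dv (ee i) (fun q : P => K q.1 q.2 j) (t, x)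
        * Dv (ee j) (fun q : P => u q.1 q.2 i) (t, x))
      = ∑ i, ∑ j, Dv (ee i) (fun q : P => u q.1 q.2 j) (t, x)
        * Dv (ee j) (fun q : P => K q.1 q.2 i) (t, x) := by
    rw [Finset.sum_comm]
    exact Finset.sum_congr rfl fun a _ => Finset.sum_congr rfl fun b _ => mul_comm _ _
  have key2 : (∑ i, ∑ j, K t x j
        * Dv (ee i) (Dv (ee j) (fun q : P => u q.1 q.2 i)) (t, x))
      = ∑ i, ∑ j, K t x i
        * Dv (ee i) (Dv (ee j) (fun q : P => u q.1 q.2 j)) (t, x) := by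
    rw [Finset.sum_comm]
    exact Finset.sum_congr rfl fun a _ => Finset.sum_congr rfl fun b _ => by
      rw [Dv_comm (hB b) (ee a) (ee b) (t, x)]
  have key3 : (∑ i, ∑ j, u t x j
        * Dv (ee i) (Dv (ee j) (fun q : P => K q.1 q.2 i)) (t, x))
      = ∑ j, ∑ i, u t x j
        * Dv (ee j) (Dv (ee i) (fun q : P => K q.1 q.2 i)) (t, x) := by
    rw [Finset.sum_comm]
    exact Finset.sum_congr rfl fun a _ => Finset.sum_congr rfl fun b _ => by
      rw [Dv_comm (hA b) (ee a) (ee b) (t, x)]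
  simp only [Finset.sum_sub_distrib, Finset.sum_add_distrib, Finset.mul_sum]
  linear_combination key1 + key2 - key3
end
end

section
/- (Ertel's theorem) Suppose u, ρ, p solve ∂ₜu + u·∇u = −(1/ρ)∇p and ∂ₜρ + ∇·(ρu) = 0 with ρ > 0, and F : ℝ × ℝ³ → ℝ is any smooth scalar. Then ρ·(∂ₜ + u·∇)((1/ρ)ω·∇F) = ω·∇((∂ₜ + u·∇)F) − (∇(1/ρ) × ∇p)·∇F, where ω = ∇×u. -/
open scoped BigOperators

noncomputable section

namespace Ertel

lemma sm_comp {u} (hu : SmoothVec u) (i : Fin 3) : SmoothS (comp u i) :=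
  (ContinuousLinearMap.proj (R := ℝ) (φ := fun _ : Fin 3 => ℝ) i).contDiff.comp hu

lemma sm_mul {f g} (hf : SmoothS f) (hg : SmoothS g) :
    SmoothS (fun a b => f a b * g a b) := hf.mul hg
lemma sm_add {f g} (hf : SmoothS f) (hg : SmoothS g) :
    SmoothS (fun a b => f a b + g a b) := hf.add hg
lemma sm_sub {f g} (hf : SmoothS f) (hg : SmoothS g) :
    SmoothS (fun a b => f a b - g a b) := hf.sub hg
lemma sm_neg {f} (hf : SmoothS f) : SmoothS (fun a b => -(f a b)) := hf.neg

lemma pt_eq {f} (hf : SmoothS f) (t : ℝ) (x : V3) :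
    pt f t x = fderiv ℝ (fun p : ℝ × V3 => f p.1 p.2) (t, x) (1, 0) := by
  have h1 : HasFDerivAt (fun s : ℝ => (s, x)) ((ContinuousLinearMap.id ℝ ℝ).prod 0) t :=
    (hasFDerivAt_id t).prodMk (hasFDerivAt_const x t)
  have h2 := ((hf.differentiable (by simp)) (t, x)).hasFDerivAt
  have h3 := (h2.comp t h1).hasDerivAt
  have : pt f t x = ((fderiv ℝ (fun p : ℝ × V3 => f p.1 p.2) (t, x)).comp
      ((ContinuousLinearMap.id ℝ ℝ).prod 0)) 1 := h3.deriv
  simpa using this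

lemma pd_eq {f} (hf : SmoothS f) (i : Fin 3) (t : ℝ) (x : V3) :
    pd i f t x = fderiv ℝ (fun p : ℝ × V3 => f p.1 p.2) (t, x) (0, Pi.single i 1) := by
  have h1 : HasFDerivAt (fun y : V3 => (t, y))
      ((0 : V3 →L[ℝ] ℝ).prod (ContinuousLinearMap.id ℝ V3)) x :=
    (hasFDerivAt_const t x).prodMk (hasFDerivAt_id x)
  have h2 := ((hf.differentiable (by simp)) (t, x)).hasFDerivAt
  have h3 := (h2.comp x h1).fderiv
  have : pd i f t x = ((fderiv ℝ (fun p : ℝ × V3 => f p.1 p.2) (t, x)).comp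
      ((0 : V3 →L[ℝ] ℝ).prod (ContinuousLinearMap.id ℝ V3))) (Pi.single i 1) := by
    rw [pd, ← h3]; rfl
  simpa using this

lemma sm_pd {f} (hf : SmoothS f) (i : Fin 3) : SmoothS (pd i f) := by
  have : (fun p : ℝ × V3 => pd i f p.1 p.2)
      = fun p => fderiv ℝ (fun q : ℝ × V3 => f q.1 q.2) p (0, Pi.single i 1) := by
    funext p; rw [pd_eq hf]
  rw [SmoothS, this]
  exact (hf.fderiv_right (by simp)).clm_apply contDiff_const

lemma sm_pt {f} (hf : SmoothS f) : SmoothS (pt f) := by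
  have : (fun p : ℝ × V3 => pt f p.1 p.2)
      = fun p => fderiv ℝ (fun q : ℝ × V3 => f q.1 q.2) p (1, 0) := by
    funext p; rw [pt_eq hf]
  rw [SmoothS, this]
  exact (hf.fderiv_right (by simp)).clm_apply contDiff_const

lemma dd {f} (hf : SmoothS f) (v w : ℝ × V3) (q : ℝ × V3) :
    fderiv ℝ (fun p => fderiv ℝ (fun r : ℝ × V3 => f r.1 r.2) p w) q v
      = fderiv ℝ (fun p => fderiv ℝ (fun r : ℝ × V3 => f r.1 r.2) p v) q w := by
  have hd : DifferentiableAt ℝ (fderiv ℝ (fun r : ℝ × V3 => f r.1 r.2)) q :=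
    ((hf.fderiv_right (m := 1) (WithTop.coe_le_coe.mpr le_top)).differentiable (by simp)) q
  have hsymm := (hf.contDiffAt (x := q)).isSymmSndFDerivAt (by rw [minSmoothness_of_isRCLikeNormedField]; exact WithTop.coe_le_coe.mpr (le_top : (2:ℕ∞) ≤ ⊤))
  rw [fderiv_clm_apply hd (differentiableAt_const w),
    fderiv_clm_apply hd (differentiableAt_const v)]
  simp [hsymm v w]

lemma pd_pd_comm {f} (hf : SmoothS f) (i j : Fin 3) (t : ℝ) (x : V3) :
    pd i (pd j f) t x = pd j (pd i f) t x := by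
  have ej : (fun p : ℝ × V3 => pd j f p.1 p.2)
      = fun p => fderiv ℝ (fun r : ℝ × V3 => f r.1 r.2) p (0, Pi.single j 1) := by
    funext p; rw [pd_eq hf]
  have ei : (fun p : ℝ × V3 => pd i f p.1 p.2)
      = fun p => fderiv ℝ (fun r : ℝ × V3 => f r.1 r.2) p (0, Pi.single i 1) := by
    funext p; rw [pd_eq hf]
  rw [pd_eq (sm_pd hf j) i, pd_eq (sm_pd hf i) j, ej, ei, dd hf]

lemma pd_pt_comm {f} (hf : SmoothS f) (i : Fin 3) (t : ℝ) (x : V3) :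
    pd i (pt f) t x = pt (pd i f) t x := by
  have et : (fun p : ℝ × V3 => pt f p.1 p.2)
      = fun p => fderiv ℝ (fun r : ℝ × V3 => f r.1 r.2) p (1, 0) := by
    funext p; rw [pt_eq hf]
  have ei : (fun p : ℝ × V3 => pd i f p.1 p.2)
      = fun p => fderiv ℝ (fun r : ℝ × V3 => f r.1 r.2) p (0, Pi.single i 1) := by
    funext p; rw [pd_eq hf]
  rw [pd_eq (sm_pt hf) i, pt_eq (sm_pd hf i), et, ei, dd hf]

lemma diffS {f} (hf : SmoothS f) (t : ℝ) (x : V3) : DifferentiableAt ℝ (f t) x :=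
  ((hf.differentiable (by simp)) (t, x)).comp x
    ((differentiableAt_const t).prodMk differentiableAt_id)

lemma diffT {f} (hf : SmoothS f) (t : ℝ) (x : V3) : DifferentiableAt ℝ (fun s => f s x) t :=
  (((hf.differentiable (by simp)) (t, x)).comp t
    (differentiableAt_id.prodMk (differentiableAt_const x)) :
      DifferentiableAt ℝ ((fun p : ℝ × V3 => f p.1 p.2) ∘ fun s : ℝ => (s, x)) t)

lemma pd_mul {f g} (hf : SmoothS f) (hg : SmoothS g) (i : Fin 3) (t : ℝ) (x : V3) :
    pd i (fun t x => f t x * g t x) t x = pd i f t x * g t x + f t x * pd i g t x := by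
  have : pd i (fun t x => f t x * g t x) t x
      = fderiv ℝ (fun y => f t y * g t y) x (Pi.single i 1) := rfl
  rw [this, fderiv_fun_mul (diffS hf t x) (diffS hg t x)]
  simp [pd]; ring

lemma pt_mul {f g} (hf : SmoothS f) (hg : SmoothS g) (t : ℝ) (x : V3) :
    pt (fun t x => f t x * g t x) t x = pt f t x * g t x + f t x * pt g t x := by
  have : pt (fun t x => f t x * g t x) t x = deriv (fun s => f s x * g s x) t := rfl
  rw [this, deriv_fun_mul (diffT hf t x) (diffT hg t x)]
  simp only [pt]

lemma pd_add {f g} (hf : SmoothS f) (hg : SmoothS g) (i : Fin 3) (t : ℝ) (x : V3) :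
    pd i (fun t x => f t x + g t x) t x = pd i f t x + pd i g t x := by
  have : pd i (fun t x => f t x + g t x) t x
      = fderiv ℝ (fun y => f t y + g t y) x (Pi.single i 1) := rfl
  rw [this, fderiv_fun_add (diffS hf t x) (diffS hg t x)]; rfl

lemma pt_add {f g} (hf : SmoothS f) (hg : SmoothS g) (t : ℝ) (x : V3) :
    pt (fun t x => f t x + g t x) t x = pt f t x + pt g t x := by
  have : pt (fun t x => f t x + g t x) t x = deriv (fun s => f s x + g s x) t := rfl
  rw [this, deriv_fun_add (diffT hf t x) (diffT hg t x)]; rfl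

lemma pd_sub {f g} (hf : SmoothS f) (hg : SmoothS g) (i : Fin 3) (t : ℝ) (x : V3) :
    pd i (fun t x => f t x - g t x) t x = pd i f t x - pd i g t x := by
  have : pd i (fun t x => f t x - g t x) t x
      = fderiv ℝ (fun y => f t y - g t y) x (Pi.single i 1) := rfl
  rw [this, fderiv_fun_sub (diffS hf t x) (diffS hg t x)]; rfl

lemma pt_sub {f g} (hf : SmoothS f) (hg : SmoothS g) (t : ℝ) (x : V3) :
    pt (fun t x => f t x - g t x) t x = pt f t x - pt g t x := by
  have : pt (fun t x => f t x - g t x) t x = deriv (fun s => f s x - g s x) t := rfl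
  rw [this, deriv_fun_sub (diffT hf t x) (diffT hg t x)]; rfl

lemma pd_neg {f} (i : Fin 3) (t : ℝ) (x : V3) :
    pd i (fun t x => -(f t x)) t x = -(pd i f t x) := by
  have : pd i (fun t x => -(f t x)) t x
      = fderiv ℝ (fun y => -(f t y)) x (Pi.single i 1) := rfl
  rw [this, fderiv_fun_neg]; rfl

lemma pd_const (c : ℝ) (i : Fin 3) (t : ℝ) (x : V3) :
    pd i (fun _ _ => c) t x = 0 := by
  have : pd i (fun _ _ => c) t x = fderiv ℝ (fun _ : V3 => c) x (Pi.single i 1) := rfl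
  rw [this, fderiv_fun_const]; simp

lemma pt_const (c : ℝ) (t : ℝ) (x : V3) : pt (fun _ _ => c) t x = 0 := by
  have : pt (fun _ _ => c) t x = deriv (fun _ : ℝ => c) t := rfl
  rw [this, deriv_const]

lemma matD_mul {u f g} (hf : SmoothS f) (hg : SmoothS g) (t : ℝ) (x : V3) :
    matD u (fun t x => f t x * g t x) t x
      = matD u f t x * g t x + f t x * matD u g t x := by
  simp only [matD, Fin.sum_univ_three]
  rw [pt_mul hf hg t x, pd_mul hf hg 0 t x, pd_mul hf hg 1 t x, pd_mul hf hg 2 t x]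
  ring

lemma matD_add {u f g} (hf : SmoothS f) (hg : SmoothS g) (t : ℝ) (x : V3) :
    matD u (fun t x => f t x + g t x) t x = matD u f t x + matD u g t x := by
  simp only [matD, Fin.sum_univ_three]
  rw [pt_add hf hg t x, pd_add hf hg 0 t x, pd_add hf hg 1 t x, pd_add hf hg 2 t x]
  ring

lemma matD_sub {u f g} (hf : SmoothS f) (hg : SmoothS g) (t : ℝ) (x : V3) :
    matD u (fun t x => f t x - g t x) t x = matD u f t x - matD u g t x := by
  simp only [matD, Fin.sum_univ_three]
  rw [pt_sub hf hg t x, pd_sub hf hg 0 t x, pd_sub hf hg 1 t x, pd_sub hf hg 2 t x]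
  ring

lemma matD_pd {u G} (hu : SmoothVec u) (hG : SmoothS G) (k : Fin 3) (t : ℝ) (x : V3) :
    matD u (pd k G) t x
      = pd k (matD u G) t x
        - (pd k (comp u 0) t x * pd 0 G t x + pd k (comp u 1) t x * pd 1 G t x
            + pd k (comp u 2) t x * pd 2 G t x) := by
  have hui := sm_comp hu
  have e : matD u G = fun a b => pt G a b + (comp u 0 a b * pd 0 G a b
      + (comp u 1 a b * pd 1 G a b + comp u 2 a b * pd 2 G a b)) := by
    funext a b; simp [matD, comp, Fin.sum_univ_three]; ring
  rw [e]
  have h1 : pd k (fun a b => pt G a b + (comp u 0 a b * pd 0 G a b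
      + (comp u 1 a b * pd 1 G a b + comp u 2 a b * pd 2 G a b))) t x
      = pd k (pt G) t x + pd k (fun a b => comp u 0 a b * pd 0 G a b
        + (comp u 1 a b * pd 1 G a b + comp u 2 a b * pd 2 G a b)) t x :=
    pd_add (sm_pt hG) (sm_add (sm_mul (hui 0) (sm_pd hG 0))
      (sm_add (sm_mul (hui 1) (sm_pd hG 1)) (sm_mul (hui 2) (sm_pd hG 2)))) k t x
  have h2 : pd k (fun a b => comp u 0 a b * pd 0 G a b
        + (comp u 1 a b * pd 1 G a b + comp u 2 a b * pd 2 G a b)) t x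
      = pd k (fun a b => comp u 0 a b * pd 0 G a b) t x
        + pd k (fun a b => comp u 1 a b * pd 1 G a b + comp u 2 a b * pd 2 G a b) t x :=
    pd_add (sm_mul (hui 0) (sm_pd hG 0))
      (sm_add (sm_mul (hui 1) (sm_pd hG 1)) (sm_mul (hui 2) (sm_pd hG 2))) k t x
  have h3 : pd k (fun a b => comp u 1 a b * pd 1 G a b + comp u 2 a b * pd 2 G a b) t x
      = pd k (fun a b => comp u 1 a b * pd 1 G a b) t x
        + pd k (fun a b => comp u 2 a b * pd 2 G a b) t x :=
    pd_add (sm_mul (hui 1) (sm_pd hG 1)) (sm_mul (hui 2) (sm_pd hG 2)) k t x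
  have m0 : pd k (fun a b => comp u 0 a b * pd 0 G a b) t x
      = pd k (comp u 0) t x * pd 0 G t x + comp u 0 t x * pd k (pd 0 G) t x :=
    pd_mul (hui 0) (sm_pd hG 0) k t x
  have m1 : pd k (fun a b => comp u 1 a b * pd 1 G a b) t x
      = pd k (comp u 1) t x * pd 1 G t x + comp u 1 t x * pd k (pd 1 G) t x :=
    pd_mul (hui 1) (sm_pd hG 1) k t x
  have m2 : pd k (fun a b => comp u 2 a b * pd 2 G a b) t x
      = pd k (comp u 2) t x * pd 2 G t x + comp u 2 t x * pd k (pd 2 G) t x :=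
    pd_mul (hui 2) (sm_pd hG 2) k t x
  rw [h1, h2, h3, m0, m1, m2, pd_pt_comm hG k t x,
    pd_pd_comm hG k 0 t x, pd_pd_comm hG k 1 t x, pd_pd_comm hG k 2 t x]
  simp only [matD, Fin.sum_univ_three, comp]
  ring

lemma pd_r {ρ} (hρ : SmoothS ρ) (hpos : ∀ t x, 0 < ρ t x) (i : Fin 3) (t : ℝ) (x : V3) :
    pd i (fun a b => 1 / ρ a b) t x = -(pd i ρ t x) / ρ t x ^ 2 := by
  have hr : SmoothS (fun a b => 1 / ρ a b) :=
    contDiff_const.div hρ (fun q => (hpos q.1 q.2).ne')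
  have hone : (fun (a : ℝ) (b : V3) => ρ a b * (1 / ρ a b)) = (fun _ _ => (1:ℝ)) := by
    funext a b; field_simp [(hpos a b).ne']
  have e : pd i (fun a b => ρ a b * (1 / ρ a b)) t x
      = pd i ρ t x * (1 / ρ t x) + ρ t x * pd i (fun a b => 1 / ρ a b) t x :=
    pd_mul hρ hr i t x
  rw [hone, pd_const] at e
  have hne := (hpos t x).ne'
  field_simp at e ⊢
  linarith

lemma pt_r {ρ} (hρ : SmoothS ρ) (hpos : ∀ t x, 0 < ρ t x) (t : ℝ) (x : V3) :
    pt (fun a b => 1 / ρ a b) t x = -(pt ρ t x) / ρ t x ^ 2 := by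
  have hr : SmoothS (fun a b => 1 / ρ a b) :=
    contDiff_const.div hρ (fun q => (hpos q.1 q.2).ne')
  have hone : (fun (a : ℝ) (b : V3) => ρ a b * (1 / ρ a b)) = (fun _ _ => (1:ℝ)) := by
    funext a b; field_simp [(hpos a b).ne']
  have e : pt (fun a b => ρ a b * (1 / ρ a b)) t x
      = pt ρ t x * (1 / ρ t x) + ρ t x * pt (fun a b => 1 / ρ a b) t x :=
    pt_mul hρ hr t x
  rw [hone, pt_const] at e
  have hne := (hpos t x).ne'
  field_simp at e ⊢
  linarith


end Ertel

open Ertel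

/-- Ertel's potential vorticity theorem for an arbitrary smooth scalar `F`. -/
theorem ertel_potential_vorticity_theorem
    (u : ℝ → V3 → V3) (ρ p F : ℝ → V3 → ℝ)
    (hu : SmoothVec u) (hρ : SmoothS ρ) (hp : SmoothS p) (hF : SmoothS F)
    (hρpos : ∀ t x, 0 < ρ t x)
    (hmom : ∀ t x i, pt (comp u i) t x + (∑ j, u t x j * pd j (comp u i) t x)
      = -(1 / ρ t x) * pd i p t x)
    (hmass : ∀ t x, pt ρ t x + div3 (fun t x i => ρ t x * u t x i) t x = 0) :
    ∀ t x, ρ t x * matD u (fun t x => (1 / ρ t x) * dot3 (curl3 u t x) (grad3 F t x)) t x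
      = dot3 (curl3 u t x) (grad3 (fun t x => matD u F t x) t x)
        - dot3 (cross3 (grad3 (fun t x => 1 / ρ t x) t x) (grad3 p t x)) (grad3 F t x) := by
  intro t x
  have hui : ∀ i, SmoothS (comp u i) := sm_comp hu
  have hr : SmoothS (fun a b => 1 / ρ a b) :=
    contDiff_const.div hρ (fun q => (hρpos q.1 q.2).ne')
  set w0 : ℝ → V3 → ℝ := fun a b => pd 1 (comp u 2) a b - pd 2 (comp u 1) a b with hw0
  set w1 : ℝ → V3 → ℝ := fun a b => pd 2 (comp u 0) a b - pd 0 (comp u 2) a b with hw1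
  set w2 : ℝ → V3 → ℝ := fun a b => pd 0 (comp u 1) a b - pd 1 (comp u 0) a b with hw2
  have smw0 : SmoothS w0 := by rw [hw0]; exact sm_sub (sm_pd (hui 2) 1) (sm_pd (hui 1) 2)
  have smw1 : SmoothS w1 := by rw [hw1]; exact sm_sub (sm_pd (hui 0) 2) (sm_pd (hui 2) 0)
  have smw2 : SmoothS w2 := by rw [hw2]; exact sm_sub (sm_pd (hui 1) 0) (sm_pd (hui 0) 1)
  have hS_pt : ∀ (a : ℝ) (b : V3), dot3 (curl3 u a b) (grad3 F a b)
      = w0 a b * pd 0 F a b + (w1 a b * pd 1 F a b + w2 a b * pd 2 F a b) := by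
    intro a b
    simp only [hw0, hw1, hw2, dot3, curl3, grad3, Fin.sum_univ_three,
      Matrix.cons_val_zero, Matrix.cons_val_one, Matrix.head_cons,
      Matrix.cons_val_two, Matrix.tail_cons]
    ring
  simp only [hS_pt]
  have smS : SmoothS (fun a b => w0 a b * pd 0 F a b
      + (w1 a b * pd 1 F a b + w2 a b * pd 2 F a b)) :=
    sm_add (sm_mul smw0 (sm_pd hF 0))
      (sm_add (sm_mul smw1 (sm_pd hF 1)) (sm_mul smw2 (sm_pd hF 2)))
  have A1 : matD u (fun a b => 1 / ρ a b * (w0 a b * pd 0 F a b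
        + (w1 a b * pd 1 F a b + w2 a b * pd 2 F a b))) t x
      = matD u (fun a b => 1 / ρ a b) t x
          * (w0 t x * pd 0 F t x + (w1 t x * pd 1 F t x + w2 t x * pd 2 F t x))
        + 1 / ρ t x * matD u (fun a b => w0 a b * pd 0 F a b
            + (w1 a b * pd 1 F a b + w2 a b * pd 2 F a b)) t x :=
    matD_mul hr smS t x
  have A2 : matD u (fun a b => 1 / ρ a b) t x
      = (pd 0 (comp u 0) t x + pd 1 (comp u 1) t x + pd 2 (comp u 2) t x) / ρ t x := by
    have hd0 : pd 0 (comp (fun a b i => ρ a b * u a b i) 0) t x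
        = pd 0 ρ t x * u t x 0 + ρ t x * pd 0 (comp u 0) t x := pd_mul hρ (hui 0) 0 t x
    have hd1 : pd 1 (comp (fun a b i => ρ a b * u a b i) 1) t x
        = pd 1 ρ t x * u t x 1 + ρ t x * pd 1 (comp u 1) t x := pd_mul hρ (hui 1) 1 t x
    have hd2 : pd 2 (comp (fun a b i => ρ a b * u a b i) 2) t x
        = pd 2 ρ t x * u t x 2 + ρ t x * pd 2 (comp u 2) t x := pd_mul hρ (hui 2) 2 t x
    have hm := hmass t x
    simp only [div3, Fin.sum_univ_three] at hm
    rw [hd0, hd1, hd2] at hm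
    simp only [matD, Fin.sum_univ_three]
    rw [pt_r hρ hρpos t x, pd_r hρ hρpos 0 t x, pd_r hρ hρpos 1 t x, pd_r hρ hρpos 2 t x]
    rw [show pt ρ t x = -(pd 0 ρ t x * u t x 0 + ρ t x * pd 0 (comp u 0) t x
        + (pd 1 ρ t x * u t x 1 + ρ t x * pd 1 (comp u 1) t x)
        + (pd 2 ρ t x * u t x 2 + ρ t x * pd 2 (comp u 2) t x)) from by linarith]
    have hne := (hρpos t x).ne'
    field_simp
    ring
  have A3a : matD u (fun a b => w0 a b * pd 0 F a b
        + (w1 a b * pd 1 F a b + w2 a b * pd 2 F a b)) t x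
      = matD u (fun a b => w0 a b * pd 0 F a b) t x
        + matD u (fun a b => w1 a b * pd 1 F a b + w2 a b * pd 2 F a b) t x :=
    matD_add (sm_mul smw0 (sm_pd hF 0))
      (sm_add (sm_mul smw1 (sm_pd hF 1)) (sm_mul smw2 (sm_pd hF 2))) t x
  have A3b : matD u (fun a b => w1 a b * pd 1 F a b + w2 a b * pd 2 F a b) t x
      = matD u (fun a b => w1 a b * pd 1 F a b) t x
        + matD u (fun a b => w2 a b * pd 2 F a b) t x :=
    matD_add (sm_mul smw1 (sm_pd hF 1)) (sm_mul smw2 (sm_pd hF 2)) t x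
  have A40 : matD u (fun a b => w0 a b * pd 0 F a b) t x
      = matD u w0 t x * pd 0 F t x + w0 t x * matD u (pd 0 F) t x :=
    matD_mul smw0 (sm_pd hF 0) t x
  have A41 : matD u (fun a b => w1 a b * pd 1 F a b) t x
      = matD u w1 t x * pd 1 F t x + w1 t x * matD u (pd 1 F) t x :=
    matD_mul smw1 (sm_pd hF 1) t x
  have A42 : matD u (fun a b => w2 a b * pd 2 F a b) t x
      = matD u w2 t x * pd 2 F t x + w2 t x * matD u (pd 2 F) t x :=
    matD_mul smw2 (sm_pd hF 2) t x
  have A50 : matD u (pd 0 F) t x = pd 0 (matD u F) t x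
      - (pd 0 (comp u 0) t x * pd 0 F t x + pd 0 (comp u 1) t x * pd 1 F t x
          + pd 0 (comp u 2) t x * pd 2 F t x) := matD_pd hu hF 0 t x
  have A51 : matD u (pd 1 F) t x = pd 1 (matD u F) t x
      - (pd 1 (comp u 0) t x * pd 0 F t x + pd 1 (comp u 1) t x * pd 1 F t x
          + pd 1 (comp u 2) t x * pd 2 F t x) := matD_pd hu hF 1 t x
  have A52 : matD u (pd 2 F) t x = pd 2 (matD u F) t x
      - (pd 2 (comp u 0) t x * pd 0 F t x + pd 2 (comp u 1) t x * pd 1 F t x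
          + pd 2 (comp u 2) t x * pd 2 F t x) := matD_pd hu hF 2 t x
  have c0 : matD u w0 t x
      = matD u (pd 1 (comp u 2)) t x - matD u (pd 2 (comp u 1)) t x := by
    rw [hw0]; exact matD_sub (sm_pd (hui 2) 1) (sm_pd (hui 1) 2) t x
  have c1 : matD u w1 t x
      = matD u (pd 2 (comp u 0)) t x - matD u (pd 0 (comp u 2)) t x := by
    rw [hw1]; exact matD_sub (sm_pd (hui 0) 2) (sm_pd (hui 2) 0) t x
  have c2 : matD u w2 t x
      = matD u (pd 0 (comp u 1)) t x - matD u (pd 1 (comp u 0)) t x := by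
    rw [hw2]; exact matD_sub (sm_pd (hui 1) 0) (sm_pd (hui 0) 1) t x
  have g0 : pd 0 (fun a b => 1 / ρ a b) t x = -(pd 0 ρ t x) / ρ t x ^ 2 := pd_r hρ hρpos 0 t x
  have g1 : pd 1 (fun a b => 1 / ρ a b) t x = -(pd 1 ρ t x) / ρ t x ^ 2 := pd_r hρ hρpos 1 t x
  have g2 : pd 2 (fun a b => 1 / ρ a b) t x = -(pd 2 ρ t x) / ρ t x ^ 2 := pd_r hρ hρpos 2 t x
  have hmf2 : matD u (comp u 2) = fun a' b' => -(1 / ρ a' b') * pd 2 p a' b' :=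
    funext fun a' => funext fun b' => hmom a' b' 2
  have d12 : matD u (pd 1 (comp u 2)) t x
      = pd 1 (matD u (comp u 2)) t x
        - (pd 1 (comp u 0) t x * pd 0 (comp u 2) t x
            + pd 1 (comp u 1) t x * pd 1 (comp u 2) t x
            + pd 1 (comp u 2) t x * pd 2 (comp u 2) t x) := matD_pd hu (hui 2) 1 t x
  rw [hmf2] at d12
  have e12 : pd 1 (fun a' b' => -(1 / ρ a' b') * pd 2 p a' b') t x
      = pd 1 (fun a' b' => -(1 / ρ a' b')) t x * pd 2 p t x
        + -(1 / ρ t x) * pd 1 (pd 2 p) t x := pd_mul (sm_neg hr) (sm_pd hp 2) 1 t x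
  have f12 : pd 1 (fun a' b' => -(1 / ρ a' b')) t x
      = -(pd 1 (fun a' b' => 1 / ρ a' b') t x) := pd_neg 1 t x
  rw [e12, f12, pd_r hρ hρpos 1 t x] at d12
  have hmf1 : matD u (comp u 1) = fun a' b' => -(1 / ρ a' b') * pd 1 p a' b' :=
    funext fun a' => funext fun b' => hmom a' b' 1
  have d21 : matD u (pd 2 (comp u 1)) t x
      = pd 2 (matD u (comp u 1)) t x
        - (pd 2 (comp u 0) t x * pd 0 (comp u 1) t x
            + pd 2 (comp u 1) t x * pd 1 (comp u 1) t x
            + pd 2 (comp u 2) t x * pd 2 (comp u 1) t x) := matD_pd hu (hui 1) 2 t x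
  rw [hmf1] at d21
  have e21 : pd 2 (fun a' b' => -(1 / ρ a' b') * pd 1 p a' b') t x
      = pd 2 (fun a' b' => -(1 / ρ a' b')) t x * pd 1 p t x
        + -(1 / ρ t x) * pd 2 (pd 1 p) t x := pd_mul (sm_neg hr) (sm_pd hp 1) 2 t x
  have f21 : pd 2 (fun a' b' => -(1 / ρ a' b')) t x
      = -(pd 2 (fun a' b' => 1 / ρ a' b') t x) := pd_neg 2 t x
  rw [e21, f21, pd_r hρ hρpos 2 t x] at d21
  have hmf0 : matD u (comp u 0) = fun a' b' => -(1 / ρ a' b') * pd 0 p a' b' :=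
    funext fun a' => funext fun b' => hmom a' b' 0
  have d20 : matD u (pd 2 (comp u 0)) t x
      = pd 2 (matD u (comp u 0)) t x
        - (pd 2 (comp u 0) t x * pd 0 (comp u 0) t x
            + pd 2 (comp u 1) t x * pd 1 (comp u 0) t x
            + pd 2 (comp u 2) t x * pd 2 (comp u 0) t x) := matD_pd hu (hui 0) 2 t x
  rw [hmf0] at d20
  have e20 : pd 2 (fun a' b' => -(1 / ρ a' b') * pd 0 p a' b') t x
      = pd 2 (fun a' b' => -(1 / ρ a' b')) t x * pd 0 p t x
        + -(1 / ρ t x) * pd 2 (pd 0 p) t x := pd_mul (sm_neg hr) (sm_pd hp 0) 2 t x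
  have f20 : pd 2 (fun a' b' => -(1 / ρ a' b')) t x
      = -(pd 2 (fun a' b' => 1 / ρ a' b') t x) := pd_neg 2 t x
  rw [e20, f20, pd_r hρ hρpos 2 t x] at d20
  have hmf2 : matD u (comp u 2) = fun a' b' => -(1 / ρ a' b') * pd 2 p a' b' :=
    funext fun a' => funext fun b' => hmom a' b' 2
  have d02 : matD u (pd 0 (comp u 2)) t x
      = pd 0 (matD u (comp u 2)) t x
        - (pd 0 (comp u 0) t x * pd 0 (comp u 2) t x
            + pd 0 (comp u 1) t x * pd 1 (comp u 2) t x
            + pd 0 (comp u 2) t x * pd 2 (comp u 2) t x) := matD_pd hu (hui 2) 0 t x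
  rw [hmf2] at d02
  have e02 : pd 0 (fun a' b' => -(1 / ρ a' b') * pd 2 p a' b') t x
      = pd 0 (fun a' b' => -(1 / ρ a' b')) t x * pd 2 p t x
        + -(1 / ρ t x) * pd 0 (pd 2 p) t x := pd_mul (sm_neg hr) (sm_pd hp 2) 0 t x
  have f02 : pd 0 (fun a' b' => -(1 / ρ a' b')) t x
      = -(pd 0 (fun a' b' => 1 / ρ a' b') t x) := pd_neg 0 t x
  rw [e02, f02, pd_r hρ hρpos 0 t x] at d02
  have hmf1 : matD u (comp u 1) = fun a' b' => -(1 / ρ a' b') * pd 1 p a' b' :=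
    funext fun a' => funext fun b' => hmom a' b' 1
  have d01 : matD u (pd 0 (comp u 1)) t x
      = pd 0 (matD u (comp u 1)) t x
        - (pd 0 (comp u 0) t x * pd 0 (comp u 1) t x
            + pd 0 (comp u 1) t x * pd 1 (comp u 1) t x
            + pd 0 (comp u 2) t x * pd 2 (comp u 1) t x) := matD_pd hu (hui 1) 0 t x
  rw [hmf1] at d01
  have e01 : pd 0 (fun a' b' => -(1 / ρ a' b') * pd 1 p a' b') t x
      = pd 0 (fun a' b' => -(1 / ρ a' b')) t x * pd 1 p t x
        + -(1 / ρ t x) * pd 0 (pd 1 p) t x := pd_mul (sm_neg hr) (sm_pd hp 1) 0 t x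
  have f01 : pd 0 (fun a' b' => -(1 / ρ a' b')) t x
      = -(pd 0 (fun a' b' => 1 / ρ a' b') t x) := pd_neg 0 t x
  rw [e01, f01, pd_r hρ hρpos 0 t x] at d01
  have hmf0 : matD u (comp u 0) = fun a' b' => -(1 / ρ a' b') * pd 0 p a' b' :=
    funext fun a' => funext fun b' => hmom a' b' 0
  have d10 : matD u (pd 1 (comp u 0)) t x
      = pd 1 (matD u (comp u 0)) t x
        - (pd 1 (comp u 0) t x * pd 0 (comp u 0) t x
            + pd 1 (comp u 1) t x * pd 1 (comp u 0) t x
            + pd 1 (comp u 2) t x * pd 2 (comp u 0) t x) := matD_pd hu (hui 0) 1 t x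
  rw [hmf0] at d10
  have e10 : pd 1 (fun a' b' => -(1 / ρ a' b') * pd 0 p a' b') t x
      = pd 1 (fun a' b' => -(1 / ρ a' b')) t x * pd 0 p t x
        + -(1 / ρ t x) * pd 1 (pd 0 p) t x := pd_mul (sm_neg hr) (sm_pd hp 0) 1 t x
  have f10 : pd 1 (fun a' b' => -(1 / ρ a' b')) t x
      = -(pd 1 (fun a' b' => 1 / ρ a' b') t x) := pd_neg 1 t x
  rw [e10, f10, pd_r hρ hρpos 1 t x] at d10
  have hpc21 : pd 2 (pd 1 p) t x = pd 1 (pd 2 p) t x := pd_pd_comm hp 2 1 t x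
  have hpc20 : pd 2 (pd 0 p) t x = pd 0 (pd 2 p) t x := pd_pd_comm hp 2 0 t x
  have hpc10 : pd 1 (pd 0 p) t x = pd 0 (pd 1 p) t x := pd_pd_comm hp 1 0 t x
  rw [A1, A2, A3a, A3b, A40, A41, A42, A50, A51, A52, c0, c1, c2,
    d12, d21, d20, d02, d01, d10]
  simp only [dot3, cross3, curl3, grad3, Fin.sum_univ_three,
    Matrix.cons_val_zero, Matrix.cons_val_one, Matrix.head_cons,
    Matrix.cons_val_two, Matrix.tail_cons]
  rw [g0, g1, g2]
  rw [hpc21, hpc20, hpc10]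
  simp only [hw0, hw1, hw2]
  have hne := (hρpos t x).ne'
  field_simp
  ring
end
end

section
/- Suppose ρ satisfies ∂ₜρ + ∇·(ρu) = 0 with ρ > 0, K is a smooth scalar invariant ((∂ₜ + u·∇)K = 0), and K₁ is a vector invariant (∂ₜK₁ + (u·∇)K₁ − (K₁·∇)u = 0). Then (1/ρ)∇·(ρ K K₁) is a scalar invariant: (∂ₜ + u·∇)((1/ρ)∇·(ρ K K₁)) = 0. -/
open scoped BigOperators

noncomputable section

namespace Aux
abbrev E : Type := ℝ × V3

/-- directional derivative of a function on space-time -/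
def P (v : E) (F : E → ℝ) : E → ℝ := fun p => fderiv ℝ F p v

def e0 : E := (1, 0)
def e (i : Fin 3) : E := (0, Pi.single i 1)

lemma P_smooth {F : E → ℝ} (hF : ContDiff ℝ (⊤ : ℕ∞) F) (v : E) : ContDiff ℝ (⊤ : ℕ∞) (P v F) :=
  (hF.fderiv_right (by simp)).clm_apply contDiff_const

lemma P_comm {F : E → ℝ} (hF : ContDiff ℝ (⊤ : ℕ∞) F) (v w : E) (p : E) :
    P v (P w F) p = P w (P v F) p := by
  have h1 : ∀ a b : E, P a (P b F) p = fderiv ℝ (fderiv ℝ F) p a b := by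
    intro a b
    have hd : DifferentiableAt ℝ (fderiv ℝ F) p :=
      ((hF.fderiv_right (m := (⊤ : ℕ∞)) (by simp)).differentiable (by simp)) p
    rw [show P a (P b F) p = fderiv ℝ (fun q => (fderiv ℝ F q) b) p a from rfl]
    rw [fderiv_clm_apply hd (differentiableAt_const b)]
    simp
  rw [h1, h1]
  exact ((hF.contDiffAt (x := p)).isSymmSndFDerivAt (n := (⊤ : ℕ∞)) (by rw [minSmoothness_of_isRCLikeNormedField]; exact WithTop.coe_le_coe.mpr le_top)) v w

lemma P_mul {F G : E → ℝ} (hF : ContDiff ℝ (⊤ : ℕ∞) F) (hG : ContDiff ℝ (⊤ : ℕ∞) G) (v : E) (p : E) :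
    P v (fun q => F q * G q) p = P v F p * G p + F p * P v G p := by
  simp only [P]
  rw [fderiv_fun_mul (hF.differentiable (by simp) p) (hG.differentiable (by simp) p)]
  simp [mul_comm]
  ring

lemma P_mul3 {F G H : E → ℝ} (hF : ContDiff ℝ (⊤ : ℕ∞) F) (hG : ContDiff ℝ (⊤ : ℕ∞) G)
    (hH : ContDiff ℝ (⊤ : ℕ∞) H) (v : E) (p : E) :
    P v (fun q => F q * G q * H q) p
      = P v F p * G p * H p + F p * P v G p * H p + F p * G p * P v H p := by
  rw [P_mul (hF.mul hG) hH, P_mul hF hG]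
  ring

lemma P_add {F G : E → ℝ} (hF : ContDiff ℝ (⊤ : ℕ∞) F) (hG : ContDiff ℝ (⊤ : ℕ∞) G) (v : E) (p : E) :
    P v (fun q => F q + G q) p = P v F p + P v G p := by
  simp only [P]
  rw [fderiv_fun_add (hF.differentiable (by simp) p) (hG.differentiable (by simp) p)]
  simp

lemma P_add3 {F G H : E → ℝ} (hF : ContDiff ℝ (⊤ : ℕ∞) F) (hG : ContDiff ℝ (⊤ : ℕ∞) G)
    (hH : ContDiff ℝ (⊤ : ℕ∞) H) (v : E) (p : E) :
    P v (fun q => F q + G q + H q) p = P v F p + P v G p + P v H p := by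
  rw [P_add (hF.add hG) hH, P_add hF hG]

lemma P_neg {F : E → ℝ} (v : E) (p : E) :
    P v (fun q => -F q) p = -P v F p := by
  simp only [P]
  rw [fderiv_fun_neg]
  simp

lemma P_sum {F : Fin 3 → E → ℝ} (hF : ∀ i, ContDiff ℝ (⊤ : ℕ∞) (F i)) (v : E) (p : E) :
    P v (fun q => ∑ i, F i q) p = ∑ i, P v (F i) p := by
  simp only [P]
  rw [fderiv_fun_sum (fun i _ => (hF i).differentiable (by simp) p)]
  simp

/-- bridge for time derivative -/
lemma pt_eq {f : ℝ → V3 → ℝ} (hf : ContDiff ℝ (⊤ : ℕ∞) (fun p : E => f p.1 p.2)) (t : ℝ) (x : V3) :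
    pt f t x = P e0 (fun p : E => f p.1 p.2) (t, x) := by
  have h : HasDerivAt (fun s => f s x)
      (fderiv ℝ (fun p : E => f p.1 p.2) (t, x) (1, 0)) t :=
    ((hf.differentiable (by simp : ((⊤ : ℕ∞) : WithTop ℕ∞) ≠ 0) (t, x)).hasFDerivAt.comp_hasDerivAt t
      ((hasDerivAt_id t).prodMk (hasDerivAt_const t x)) :)
  rw [pt, h.deriv]; rfl

/-- bridge for spatial derivative -/
lemma pd_eq {f : ℝ → V3 → ℝ} (hf : ContDiff ℝ (⊤ : ℕ∞) (fun p : E => f p.1 p.2))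
    (i : Fin 3) (t : ℝ) (x : V3) :
    pd i f t x = P (e i) (fun p : E => f p.1 p.2) (t, x) := by
  have h : HasFDerivAt (fun y => f t y)
      ((fderiv ℝ (fun p : E => f p.1 p.2) (t, x)).comp
        ((0 : V3 →L[ℝ] ℝ).prod (ContinuousLinearMap.id ℝ V3))) x :=
    (hf.differentiable (by simp) (t, x)).hasFDerivAt.comp x
      ((hasFDerivAt_const t x).prodMk (hasFDerivAt_id x))
  rw [pd, h.fderiv]
  rfl


/-- Core computation: if `S` satisfies the continuity equation and `A` is a vector
invariant, then `q = ∑ᵢ ∂ᵢ(S Aᵢ)` satisfies `∂ₜq + u·∇q + (∇·u) q = 0`. -/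
lemma keyP (U A : Fin 3 → E → ℝ) (S : E → ℝ)
    (hU : ∀ i, ContDiff ℝ (⊤ : ℕ∞) (U i)) (hS : ContDiff ℝ (⊤ : ℕ∞) S) (hA : ∀ i, ContDiff ℝ (⊤ : ℕ∞) (A i))
    (hcont : ∀ p, P e0 S p + ∑ j, P (e j) (fun q => S q * U j q) p = 0)
    (hAinv : ∀ i p, P e0 (A i) p + ∑ j, U j p * P (e j) (A i) p
        - ∑ j, A j p * P (e j) (U i) p = 0) :
    ∀ p, P e0 (fun q => ∑ i, P (e i) (fun q' => S q' * A i q') q) p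
        + ∑ j, U j p * P (e j) (fun q => ∑ i, P (e i) (fun q' => S q' * A i q') q) p
        + (∑ j, P (e j) (U j) p) * (∑ i, P (e i) (fun q' => S q' * A i q') p) = 0 := by
  intro p
  have hB : ∀ i, ContDiff ℝ (⊤ : ℕ∞) (fun q => S q * A i q) := fun i => hS.mul (hA i)
  have hSU : ∀ j, ContDiff ℝ (⊤ : ℕ∞) (fun q => S q * U j q) := fun j => hS.mul (hU j)
  have hC : ∀ i j, ContDiff ℝ (⊤ : ℕ∞) (fun q => S q * U j q * A i q) := fun i j =>
    (hSU j).mul (hA i)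
  have hPB : ∀ i v, P v (fun q => S q * A i q)
      = fun p => P v S p * A i p + S p * P v (A i) p :=
    fun i v => funext fun p => P_mul hS (hA i) v p
  -- the time derivative of S Aᵢ, rewritten using the two evolution equations
  have hG : ∀ i, P e0 (fun q => S q * A i q)
      = fun p => -(∑ j, P (e j) (fun q => S q * U j q * A i q) p)
          + ∑ j, S p * A j p * P (e j) (U i) p := by
    intro i; funext p'
    simp only [hPB i e0]
    have e2 : ∀ j, P (e j) (fun q => S q * U j q * A i q) p'
        = P (e j) (fun q => S q * U j q) p' * A i p'
          + S p' * U j p' * P (e j) (A i) p' := by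
      intro j
      rw [P_mul (hSU j) (hA i)]
    simp only [e2]
    have e3 := hcont p'
    have e4 := hAinv i p'
    simp only [Fin.sum_univ_three] at e3 e4 ⊢
    linear_combination A i p' * e3 + S p' * e4
  have hQj : ∀ v, P v (fun q => ∑ i, P (e i) (fun q' => S q' * A i q') q) p
      = ∑ i, P v (P (e i) (fun q' => S q' * A i q')) p :=
    fun v => P_sum (fun i => P_smooth (hB i) (e i)) v p
  have hI : ∀ i, P e0 (P (e i) (fun q' => S q' * A i q')) p
      = P (e i) (P e0 (fun q' => S q' * A i q')) p :=
    fun i => P_comm (hB i) _ _ p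
  have hGsplit : ∀ i, P (e i) (P e0 (fun q' => S q' * A i q')) p
      = -(∑ j, P (e i) (P (e j) (fun q => S q * U j q * A i q)) p)
        + ∑ j, P (e i) (fun p' => S p' * A j p' * P (e j) (U i) p') p := by
    intro i
    rw [hG i]
    have s1 : ContDiff ℝ (⊤ : ℕ∞) (fun p' : E =>
        -(∑ j, P (e j) (fun q => S q * U j q * A i q) p')) :=
      (ContDiff.sum (fun j _ => P_smooth (hC i j) (e j))).neg
    have s2 : ContDiff ℝ (⊤ : ℕ∞) (fun p' : E => ∑ j, S p' * A j p' * P (e j) (U i) p') :=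
      ContDiff.sum (fun j _ => (hS.mul (hA j)).mul (P_smooth (hU i) (e j)))
    rw [P_add s1 s2, P_neg, P_sum (fun j => P_smooth (hC i j) (e j)),
      P_sum (fun j => (hS.mul (hA j)).mul (P_smooth (hU i) (e j)))]
  have hCexp : ∀ i j, P (e i) (P (e j) (fun q => S q * U j q * A i q)) p
      = P (e j) (P (e i) S) p * U j p * A i p
        + P (e i) S p * P (e j) (U j) p * A i p
        + P (e i) S p * U j p * P (e j) (A i) p
        + (P (e j) S p * P (e i) (U j) p * A i p
          + S p * P (e j) (P (e i) (U j)) p * A i p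
          + S p * P (e i) (U j) p * P (e j) (A i) p)
        + (P (e j) S p * U j p * P (e i) (A i) p
          + S p * P (e j) (U j) p * P (e i) (A i) p
          + S p * U j p * P (e j) (P (e i) (A i)) p) := by
    intro i j
    rw [P_comm (hC i j)]
    have h1 : P (e i) (fun q => S q * U j q * A i q)
        = fun p => P (e i) S p * U j p * A i p + S p * P (e i) (U j) p * A i p
            + S p * U j p * P (e i) (A i) p :=
      funext fun p => P_mul3 hS (hU j) (hA i) _ p
    rw [h1]
    rw [P_add3 ((P_smooth hS (e i)).mul (hU j) |>.mul (hA i))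
        ((hS.mul (P_smooth (hU j) (e i))).mul (hA i))
        ((hS.mul (hU j)).mul (P_smooth (hA i) (e i)))]
    rw [P_mul3 (P_smooth hS (e i)) (hU j) (hA i),
      P_mul3 hS (P_smooth (hU j) (e i)) (hA i),
      P_mul3 hS (hU j) (P_smooth (hA i) (e i))]
  have hDexp : ∀ i j, P (e i) (fun p' => S p' * A j p' * P (e j) (U i) p') p
      = P (e i) S p * A j p * P (e j) (U i) p
        + S p * P (e i) (A j) p * P (e j) (U i) p
        + S p * A j p * P (e i) (P (e j) (U i)) p :=
    fun i j => P_mul3 hS (hA j) (P_smooth (hU i) (e j)) _ p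
  have hII : ∀ j i, P (e j) (P (e i) (fun q' => S q' * A i q')) p
      = P (e j) (P (e i) S) p * A i p + P (e i) S p * P (e j) (A i) p
        + (P (e j) S p * P (e i) (A i) p + S p * P (e j) (P (e i) (A i)) p) := by
    intro j i
    rw [hPB i (e i)]
    rw [P_add ((P_smooth hS (e i)).mul (hA i)) (hS.mul (P_smooth (hA i) (e i)))]
    rw [P_mul (P_smooth hS (e i)) (hA i), P_mul hS (P_smooth (hA i) (e i))]
  have hPBval : ∀ i, P (e i) (fun q' => S q' * A i q') p
      = P (e i) S p * A i p + S p * P (e i) (A i) p :=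
    fun i => P_mul hS (hA i) (e i) p
  simp only [hQj, hI, hGsplit, hCexp, hDexp, hII, hPBval]
  simp only [Fin.sum_univ_three]
  ring

/-- Final algebraic step: dividing an equation of the form
`∂ₜQ + u·∇Q + (∇·u) Q = 0` by a positive density satisfying the continuity
equation yields a scalar invariant. -/
lemma finishP (R Q : E → ℝ) (U : Fin 3 → E → ℝ)
    (hR : ContDiff ℝ (⊤ : ℕ∞) R) (hQ : ContDiff ℝ (⊤ : ℕ∞) Q) (hU : ∀ i, ContDiff ℝ (⊤ : ℕ∞) (U i))
    (hRne : ∀ p, R p ≠ 0)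
    (hmass : ∀ p, P e0 R p + ∑ j, P (e j) (fun q => R q * U j q) p = 0)
    (hkey : ∀ p, P e0 Q p + ∑ j, U j p * P (e j) Q p
        + (∑ j, P (e j) (U j) p) * Q p = 0) (p : E) :
    P e0 (fun q => (R q)⁻¹ * Q q) p
      + ∑ j, U j p * P (e j) (fun q => (R q)⁻¹ * Q q) p = 0 := by
  have hg : ContDiff ℝ (⊤ : ℕ∞) (fun q => (R q)⁻¹ * Q q) := (hR.inv hRne).mul hQ
  have hgQ : Q = (fun q => R q * ((R q)⁻¹ * Q q)) := by
    funext q; rw [← mul_assoc, mul_inv_cancel₀ (hRne q), one_mul]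
  have hPg : ∀ v, P v Q p
      = P v R p * ((R p)⁻¹ * Q p) + R p * P v (fun q => (R q)⁻¹ * Q q) p := by
    intro v
    conv_lhs => rw [hgQ]
    exact P_mul hR hg v p
  have hmul : ∀ j, P (e j) (fun q => R q * U j q) p
      = P (e j) R p * U j p + R p * P (e j) (U j) p := fun j => P_mul hR (hU j) _ p
  have hc : R p * (R p)⁻¹ = 1 := mul_inv_cancel₀ (hRne p)
  have H : R p * (P e0 (fun q => (R q)⁻¹ * Q q) p
      + ∑ j, U j p * P (e j) (fun q => (R q)⁻¹ * Q q) p) = 0 := by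
    have hk := hkey p
    have hm := hmass p
    simp only [hmul] at hm
    have h0 := hPg e0
    have h1 := hPg (e 0)
    have h2 := hPg (e 1)
    have h3 := hPg (e 2)
    simp only [Fin.sum_univ_three] at hk hm ⊢
    linear_combination hk - h0 - U 0 p * h1 - U 1 p * h2 - U 2 p * h3
      - (R p)⁻¹ * Q p * hm
      + (P (e 0) (U 0) p + P (e 1) (U 1) p + P (e 2) (U 2) p) * Q p * hc
  exact (mul_eq_zero.mp H).resolve_left (hRne p)

end Aux

open Aux in
/-- The densitized divergence `(1/ρ)∇·(ρ K K₁)` of a scalar invariant times a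
vector invariant is a scalar invariant. -/
theorem densitized_divergence_invariant
    (u K₁ : ℝ → V3 → V3) (ρ K : ℝ → V3 → ℝ)
    (hu : SmoothVec u) (hK₁ : SmoothVec K₁) (hρ : SmoothS ρ) (hK : SmoothS K)
    (hρpos : ∀ t x, 0 < ρ t x)
    (hmass : ∀ t x, pt ρ t x + div3 (fun t x i => ρ t x * u t x i) t x = 0)
    (hKinv : ∀ t x, matD u K t x = 0)
    (hK₁inv : ∀ t x, DtVec u K₁ t x = 0) :
    ∀ t x, matD u
      (fun t x => (1 / ρ t x) * div3 (fun t x i => ρ t x * K t x * K₁ t x i) t x) t x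
      = 0 := by
  have hUc : ∀ i, ContDiff ℝ (⊤ : ℕ∞) (fun p : E => u p.1 p.2 i) := fun i => contDiff_pi.mp hu i
  have hAc : ∀ i, ContDiff ℝ (⊤ : ℕ∞) (fun p : E => K₁ p.1 p.2 i) := fun i => contDiff_pi.mp hK₁ i
  have hRc : ContDiff ℝ (⊤ : ℕ∞) (fun p : E => ρ p.1 p.2) := hρ
  have hKc : ContDiff ℝ (⊤ : ℕ∞) (fun p : E => K p.1 p.2) := hK
  have hSc : ContDiff ℝ (⊤ : ℕ∞) (fun p : E => ρ p.1 p.2 * K p.1 p.2) := hRc.mul hKc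
  -- mass conservation in P-form
  have hmassP : ∀ p : E, P e0 (fun q : E => ρ q.1 q.2) p
      + ∑ j, P (e j) (fun q : E => ρ q.1 q.2 * u q.1 q.2 j) p = 0 := by
    rintro ⟨t, x⟩
    have h := hmass t x
    have hpd : ∀ j, pd j (comp (fun t x i => ρ t x * u t x i) j) t x
        = P (e j) (fun q : E => ρ q.1 q.2 * u q.1 q.2 j) (t, x) :=
      fun j => pd_eq (hRc.mul (hUc j)) j t x
    rw [pt_eq hρ t x] at h
    simp only [div3, hpd] at h
    exact h
  -- K invariance in P-form
  have hKP : ∀ p : E, P e0 (fun q : E => K q.1 q.2) p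
      + ∑ j, u p.1 p.2 j * P (e j) (fun q : E => K q.1 q.2) p = 0 := by
    rintro ⟨t, x⟩
    have h := hKinv t x
    rw [matD, pt_eq hK t x] at h
    have hpd : ∀ j, pd j K t x = P (e j) (fun q : E => K q.1 q.2) (t, x) :=
      fun j => pd_eq hK j t x
    simp only [hpd] at h
    exact h
  -- continuity equation for σ = ρK
  have hcontS : ∀ p : E, P e0 (fun q : E => ρ q.1 q.2 * K q.1 q.2) p
      + ∑ j, P (e j) (fun q : E => ρ q.1 q.2 * K q.1 q.2 * u q.1 q.2 j) p = 0 := by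
    intro p
    have e1 := P_mul hRc hKc e0 p
    have e2 : ∀ j, P (e j) (fun q : E => ρ q.1 q.2 * K q.1 q.2 * u q.1 q.2 j) p
        = P (e j) (fun q : E => ρ q.1 q.2) p * K p.1 p.2 * u p.1 p.2 j
          + ρ p.1 p.2 * P (e j) (fun q : E => K q.1 q.2) p * u p.1 p.2 j
          + ρ p.1 p.2 * K p.1 p.2 * P (e j) (fun q : E => u q.1 q.2 j) p :=
      fun j => P_mul3 hRc hKc (hUc j) (e j) p
    have e3 : ∀ j, P (e j) (fun q : E => ρ q.1 q.2 * u q.1 q.2 j) p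
        = P (e j) (fun q : E => ρ q.1 q.2) p * u p.1 p.2 j
          + ρ p.1 p.2 * P (e j) (fun q : E => u q.1 q.2 j) p :=
      fun j => P_mul hRc (hUc j) (e j) p
    have h1 := hmassP p
    have h2 := hKP p
    simp only [e3] at h1
    simp only [e1, e2]
    simp only [Fin.sum_univ_three] at h1 h2 ⊢
    linear_combination K p.1 p.2 * h1 + ρ p.1 p.2 * h2
  -- K₁ invariance in P-form
  have hAinvP : ∀ (i : Fin 3) (p : E), P e0 (fun q : E => K₁ q.1 q.2 i) p
      + ∑ j, u p.1 p.2 j * P (e j) (fun q : E => K₁ q.1 q.2 i) p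
      - ∑ j, K₁ p.1 p.2 j * P (e j) (fun q : E => u q.1 q.2 i) p = 0 := by
    intro i p
    obtain ⟨t, x⟩ := p
    have h := congrFun (hK₁inv t x) i
    simp only [DtVec, Pi.zero_apply] at h
    rw [pt_eq (f := comp K₁ i) (hAc i) t x] at h
    have hpd1 : ∀ j, pd j (comp K₁ i) t x
        = P (e j) (fun q : E => K₁ q.1 q.2 i) (t, x) :=
      fun j => pd_eq (hAc i) j t x
    have hpd2 : ∀ j, pd j (comp u i) t x
        = P (e j) (fun q : E => u q.1 q.2 i) (t, x) :=
      fun j => pd_eq (hUc i) j t x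
    simp only [hpd1, hpd2] at h
    exact h
  -- key computation
  have hkey := keyP (fun i q => u q.1 q.2 i) (fun i q => K₁ q.1 q.2 i)
      (fun q => ρ q.1 q.2 * K q.1 q.2) hUc hSc hAc hcontS hAinvP
  -- rewriting the target function in P-form
  have hpdi : ∀ (i : Fin 3) (q : E),
      pd i (comp (fun t x i => ρ t x * K t x * K₁ t x i) i) q.1 q.2
        = P (e i) (fun p : E => ρ p.1 p.2 * K p.1 p.2 * K₁ p.1 p.2 i) q :=
    fun i q => pd_eq (hSc.mul (hAc i)) i q.1 q.2
  have hfe : (fun p : E => 1 / ρ p.1 p.2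
        * div3 (fun t x i => ρ t x * K t x * K₁ t x i) p.1 p.2)
      = fun q : E => (ρ q.1 q.2)⁻¹
          * ∑ i, P (e i) (fun p : E => ρ p.1 p.2 * K p.1 p.2 * K₁ p.1 p.2 i) q := by
    funext q
    rw [one_div, div3]
    congr 1
    exact Finset.sum_congr rfl fun i _ => hpdi i q
  have hQsm : ContDiff ℝ (⊤ : ℕ∞) (fun q : E =>
      ∑ i, P (e i) (fun p : E => ρ p.1 p.2 * K p.1 p.2 * K₁ p.1 p.2 i) q) :=
    ContDiff.sum fun i _ => P_smooth (hSc.mul (hAc i)) (e i)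
  have hfsm : SmoothS (fun t x => 1 / ρ t x
      * div3 (fun t x i => ρ t x * K t x * K₁ t x i) t x) := by
    show ContDiff ℝ (⊤ : ℕ∞) (fun p : E => 1 / ρ p.1 p.2
        * div3 (fun t x i => ρ t x * K t x * K₁ t x i) p.1 p.2)
    rw [hfe]
    exact (hRc.inv fun q => (hρpos q.1 q.2).ne').mul hQsm
  intro t x
  rw [matD, pt_eq (f := fun t x => 1 / ρ t x
      * div3 (fun t x i => ρ t x * K t x * K₁ t x i) t x) hfsm t x]
  have hpdf : ∀ i, pd i (fun t x => 1 / ρ t x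
        * div3 (fun t x i => ρ t x * K t x * K₁ t x i) t x) t x
      = P (e i) (fun p : E => 1 / ρ p.1 p.2
          * div3 (fun t x i => ρ t x * K t x * K₁ t x i) p.1 p.2) (t, x) :=
    fun i => pd_eq (f := fun t x => 1 / ρ t x
        * div3 (fun t x i => ρ t x * K t x * K₁ t x i) t x) hfsm i t x
  simp only [hpdf]
  rw [hfe]
  exact finishP _ _ _ hRc hQsm hUc (fun p => (hρpos p.1 p.2).ne') hmassP hkey (t, x)
end
end

section
/- Suppose u, ρ solve compressible Euler with barotropic equation of state p = P(ρ), ρ > 0, and φ satisfies (∂ₜ + u·∇)φ = (1/2)|u|² − h(ρ) where h'(ρ) = P'(ρ)/ρ (the enthalpy). Let v = u − ∇φ. Then the Ertel–Rossby scalar (1/ρ)(∇×u)·v is a material invariant: (∂ₜ + u·∇)((1/ρ)(∇×u)·v) = 0. -/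
open scoped BigOperators

noncomputable section

/- ### Auxiliary machinery -/

abbrev E3 : Type := ℝ × V3

/-- Spatial coordinate direction in `ℝ × V3`. -/
def ee (i : Fin 3) : E3 := ((0:ℝ), Pi.single i 1)

/-- A time-dependent field as a function on `ℝ × V3`. -/
def Fl (f : ℝ → V3 → ℝ) : E3 → ℝ := fun p => f p.1 p.2

theorem smooth_fd {F : E3 → ℝ} (hF : ContDiff ℝ (⊤ : ℕ∞) F) (w : E3) :
    ContDiff ℝ (⊤ : ℕ∞) (fun p => fderiv ℝ F p w) :=
  (hF.fderiv_right (by simp)).clm_apply contDiff_const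

theorem dswap {F : E3 → ℝ} (hF : ContDiff ℝ (⊤ : ℕ∞) F) (p v w : E3) :
    fderiv ℝ (fun q => fderiv ℝ F q v) p w = fderiv ℝ (fun q => fderiv ℝ F q w) p v := by
  have hd : DifferentiableAt ℝ (fderiv ℝ F) p :=
    ((hF.fderiv_right (m := (⊤ : ℕ∞)) (by simp)).differentiable (by simp)).differentiableAt
  have h1 : ∀ v : E3, fderiv ℝ (fun q => fderiv ℝ F q v) p = (fderiv ℝ (fderiv ℝ F) p).flip v := by
    intro v
    rw [fderiv_clm_apply hd (differentiableAt_const v)]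
    simp
  rw [h1, h1]
  show (fderiv ℝ (fderiv ℝ F) p) w v = (fderiv ℝ (fderiv ℝ F) p) v w
  exact (hF.contDiffAt.isSymmSndFDerivAt (by rw [minSmoothness_of_isRCLikeNormedField]; exact WithTop.coe_le_coe.mpr le_top)) w v

theorem dmul {p : E3} {F G : E3 → ℝ} (hF : DifferentiableAt ℝ F p)
    (hG : DifferentiableAt ℝ G p) (w : E3) :
    fderiv ℝ (fun q => F q * G q) p w = fderiv ℝ F p w * G p + F p * fderiv ℝ G p w := by
  rw [fderiv_fun_mul hF hG]; simp; ring

theorem dsum {ι : Type*} (s : Finset ι) {F : ι → E3 → ℝ} {p : E3}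
    (hF : ∀ i ∈ s, DifferentiableAt ℝ (F i) p) (w : E3) :
    fderiv ℝ (fun q => ∑ i ∈ s, F i q) p w = ∑ i ∈ s, fderiv ℝ (F i) p w := by
  rw [fderiv_fun_sum hF]; simp

theorem dadd {p : E3} {F G : E3 → ℝ} (hF : DifferentiableAt ℝ F p)
    (hG : DifferentiableAt ℝ G p) (w : E3) :
    fderiv ℝ (fun q => F q + G q) p w = fderiv ℝ F p w + fderiv ℝ G p w := by
  rw [fderiv_fun_add hF hG]; simp

theorem dsub {p : E3} {F G : E3 → ℝ} (hF : DifferentiableAt ℝ F p)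
    (hG : DifferentiableAt ℝ G p) (w : E3) :
    fderiv ℝ (fun q => F q - G q) p w = fderiv ℝ F p w - fderiv ℝ G p w := by
  rw [fderiv_fun_sub hF hG]; simp

theorem dneg {p : E3} (F : E3 → ℝ) (w : E3) :
    fderiv ℝ (fun q => -F q) p w = -fderiv ℝ F p w := by
  rw [fderiv_fun_neg]; simp

theorem dcmul {p : E3} (c : ℝ) {F : E3 → ℝ} (hF : DifferentiableAt ℝ F p) (w : E3) :
    fderiv ℝ (fun q => c * F q) p w = c * fderiv ℝ F p w := by
  rw [fderiv_const_mul hF c]; simp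
  
theorem dinv {p : E3} {F : E3 → ℝ} (hF : DifferentiableAt ℝ F p) (hne : F p ≠ 0) (w : E3) :
    fderiv ℝ (fun q => (F q)⁻¹) p w = -((F p)^2)⁻¹ * fderiv ℝ F p w := by
  have := ((hasDerivAt_inv hne).comp_hasFDerivAt p hF.hasFDerivAt).fderiv
  rw [show (fun q => (F q)⁻¹) = (fun y => y⁻¹) ∘ F from rfl, this]; simp

theorem dcomp {p : E3} {h : ℝ → ℝ} {F : E3 → ℝ} (hh : Differentiable ℝ h)
    (hF : DifferentiableAt ℝ F p) (w : E3) :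
    fderiv ℝ (fun q => h (F q)) p w = deriv h (F p) * fderiv ℝ F p w := by
  have := (((hh (F p)).hasDerivAt).comp_hasFDerivAt p hF.hasFDerivAt).fderiv
  rw [show (fun q => h (F q)) = h ∘ F from rfl, this]; simp

theorem dlin (G : E3 → ℝ) (p : E3) (w : V3) :
    fderiv ℝ G p ((1:ℝ), w) = fderiv ℝ G p ((1:ℝ), (0:V3)) + ∑ k, w k * fderiv ℝ G p (ee k) := by
  have hv : ((1:ℝ), w) = ((1:ℝ), (0:V3)) + ∑ k, w k • ee k := by
    have h2 : (∑ k, w k • ee k) = ((0:ℝ), w) := by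
      refine Prod.ext ?_ ?_
      · rw [Prod.fst_sum]; simp [ee]
      · show (∑ k, w k • ee k).2 = w
        rw [Prod.snd_sum]
        funext j
        simp [ee, Finset.sum_apply, Pi.single_apply, mul_ite]
    rw [h2]; simp
  rw [hv, map_add, map_sum]; simp

theorem pd_eq {f : ℝ → V3 → ℝ} (hf : ContDiff ℝ (⊤ : ℕ∞) (Fl f)) (i : Fin 3) (t : ℝ) (x : V3) :
    pd i f t x = fderiv ℝ (Fl f) (t, x) (ee i) := by
  have h1 : HasFDerivAt (f t) ((fderiv ℝ (Fl f) (t,x)).comp (ContinuousLinearMap.inr ℝ ℝ V3)) x :=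
    (hf.differentiable (by simp) (t,x)).hasFDerivAt.comp x (hasFDerivAt_prodMk_right t x)
  rw [pd, h1.fderiv]; rfl

theorem pt_eq {f : ℝ → V3 → ℝ} (hf : ContDiff ℝ (⊤ : ℕ∞) (Fl f)) (t : ℝ) (x : V3) :
    pt f t x = fderiv ℝ (Fl f) (t, x) ((1:ℝ), (0:V3)) := by
  have h2 : HasDerivAt (fun s : ℝ => (s, x)) (((1:ℝ), (0:V3)) : E3) t :=
    (hasDerivAt_id t).prodMk (hasDerivAt_const t x)
  have h1 : HasDerivAt (fun s => f s x) (fderiv ℝ (Fl f) (t,x) ((1:ℝ),(0:V3))) t :=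
    show HasDerivAt (Fl f ∘ fun s : ℝ => (s, x)) _ t from
      (hf.differentiable (by simp) (t,x)).hasFDerivAt.comp_hasDerivAt t h2
  rw [pt, h1.deriv]

theorem matD_eq {f : ℝ → V3 → ℝ} (u : ℝ → V3 → V3) (hf : ContDiff ℝ (⊤ : ℕ∞) (Fl f)) (t : ℝ) (x : V3) :
    matD u f t x = fderiv ℝ (Fl f) (t, x) ((1:ℝ), u t x) := by
  rw [matD, dlin, pt_eq hf]
  congr 1
  exact Finset.sum_congr rfl fun i _ => by rw [pd_eq hf]

/- ### Field-level objects -/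

def Uc (u : ℝ → V3 → V3) (i : Fin 3) : E3 → ℝ := fun p => u p.1 p.2 i
def Af (u : ℝ → V3 → V3) (i j : Fin 3) : E3 → ℝ := fun q => fderiv ℝ (Uc u j) q (ee i)
def Gf (φ : ℝ → V3 → ℝ) (i : Fin 3) : E3 → ℝ := fun q => fderiv ℝ (Fl φ) q (ee i)
def Vf (u : ℝ → V3 → V3) (φ : ℝ → V3 → ℝ) (i : Fin 3) : E3 → ℝ :=
  fun q => Uc u i q - Gf φ i q

theorem sUc {u : ℝ → V3 → V3} (hu : SmoothVec u) (i : Fin 3) : ContDiff ℝ (⊤ : ℕ∞) (Uc u i) :=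
  contDiff_pi.mp hu i

theorem matA_eq (u : ℝ → V3 → V3) (H : E3 → ℝ) (hu : SmoothVec u) (hH : ContDiff ℝ (⊤ : ℕ∞) H)
    (heq : ∀ (q : E3) (i : Fin 3),
      fderiv ℝ (Uc u i) q ((1:ℝ), u q.1 q.2) = - fderiv ℝ H q (ee i)) :
    ∀ (i j : Fin 3) (q : E3), fderiv ℝ (Af u j i) q ((1:ℝ), u q.1 q.2)
      = - fderiv ℝ (fun r => fderiv ℝ H r (ee i)) q (ee j)
        - ∑ k, Af u j k q * Af u k i q := by
  intro i j q
  have sU : ∀ i, ContDiff ℝ (⊤ : ℕ∞) (Uc u i) := sUc hu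
  have sA : ∀ i j, ContDiff ℝ (⊤ : ℕ∞) (Af u i j) := fun i j => smooth_fd (sU j) (ee i)
  have hUc : ∀ (r : E3) (k : Fin 3), u r.1 r.2 k = Uc u k r := fun _ _ => rfl
  have hAf : ∀ (r : E3) (k m : Fin 3), fderiv ℝ (Uc u m) r (ee k) = Af u k m r :=
    fun _ _ _ => rfl
  have hfun : (fun r : E3 => fderiv ℝ (Uc u i) r ((1:ℝ),(0:V3)) + ∑ k, Uc u k r * Af u k i r)
      = fun r => - fderiv ℝ H r (ee i) := by
    funext r
    have h0 := heq r i
    rw [dlin (Uc u i) r (u r.1 r.2)] at h0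
    simp only [hUc, hAf] at h0
    exact h0
  have key := congrArg (fun (F : E3 → ℝ) => fderiv ℝ F q (ee j)) hfun
  rw [dadd ((smooth_fd (sU i) _).differentiable (by simp) q)
      ((ContDiff.sum (fun k _ => (sU k).mul (sA k i))).differentiable (by simp) q),
    dsum Finset.univ (fun k _ => ((sU k).mul (sA k i)).differentiable (by simp) q),
    dswap (sU i)] at key
  have e3 : ∀ k : Fin 3, fderiv ℝ (fun r => Uc u k r * Af u k i r) q (ee j)
      = Af u j k q * Af u k i q + Uc u k q * fderiv ℝ (Af u j i) q (ee k) := by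
    intro k
    rw [dmul ((sU k).differentiable (by simp) q) ((sA k i).differentiable (by simp) q)]
    rw [hAf]
    congr 1
    rw [show Af u k i = fun r => fderiv ℝ (Uc u i) r (ee k) from rfl, dswap (sU i),
      show (fun r => fderiv ℝ (Uc u i) r (ee j)) = Af u j i from rfl]
  rw [Finset.sum_congr rfl (fun k _ => e3 k)] at key
  rw [dneg] at key
  rw [dlin (Af u j i) q (u q.1 q.2)]
  simp only [hUc]
  rw [show (fun r => fderiv ℝ (Uc u i) r (ee j)) = Af u j i from rfl] at key
  rw [Finset.sum_add_distrib] at key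
  linarith [key]

theorem matG_eq (u : ℝ → V3 → V3) (φ : ℝ → V3 → ℝ) (H : E3 → ℝ) (hu : SmoothVec u)
    (hφ : ContDiff ℝ (⊤ : ℕ∞) (Fl φ)) (hH : ContDiff ℝ (⊤ : ℕ∞) H)
    (heq : ∀ q : E3, fderiv ℝ (Fl φ) q ((1:ℝ), u q.1 q.2)
      = (1/2) * (∑ k, Uc u k q * Uc u k q) - H q) :
    ∀ (i : Fin 3) (q : E3), fderiv ℝ (Gf φ i) q ((1:ℝ), u q.1 q.2)
      = ∑ k, Uc u k q * Af u i k q - fderiv ℝ H q (ee i)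
        - ∑ k, Af u i k q * Gf φ k q := by
  intro i q
  have sU : ∀ i, ContDiff ℝ (⊤ : ℕ∞) (Uc u i) := sUc hu
  have sA : ∀ i j, ContDiff ℝ (⊤ : ℕ∞) (Af u i j) := fun i j => smooth_fd (sU j) (ee i)
  have sG : ∀ i, ContDiff ℝ (⊤ : ℕ∞) (Gf φ i) := fun i => smooth_fd hφ (ee i)
  have hUc : ∀ (r : E3) (k : Fin 3), u r.1 r.2 k = Uc u k r := fun _ _ => rfl
  have hGf : ∀ (r : E3) (k : Fin 3), fderiv ℝ (Fl φ) r (ee k) = Gf φ k r := fun _ _ => rfl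
  have hAf : ∀ (r : E3) (k m : Fin 3), fderiv ℝ (Uc u m) r (ee k) = Af u k m r :=
    fun _ _ _ => rfl
  have hfun : (fun r : E3 => fderiv ℝ (Fl φ) r ((1:ℝ),(0:V3)) + ∑ k, Uc u k r * Gf φ k r)
      = fun r => (1/2) * (∑ k, Uc u k r * Uc u k r) - H r := by
    funext r
    have h0 := heq r
    rw [dlin (Fl φ) r (u r.1 r.2)] at h0
    simp only [hUc, hGf] at h0
    exact h0
  have key := congrArg (fun (F : E3 → ℝ) => fderiv ℝ F q (ee i)) hfun
  rw [dadd ((smooth_fd hφ _).differentiable (by simp) q)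
      ((ContDiff.sum (fun k _ => (sU k).mul (sG k))).differentiable (by simp) q),
    dsum Finset.univ (fun k _ => ((sU k).mul (sG k)).differentiable (by simp) q),
    dswap hφ,
    dsub ((contDiff_const.mul (ContDiff.sum (fun k _ => (sU k).mul (sU k)))).differentiable (by simp) q)
      (hH.differentiable (by simp) q),
    dcmul _ ((ContDiff.sum (fun k _ => (sU k).mul (sU k))).differentiable (by simp) q),
    dsum Finset.univ (fun k _ => ((sU k).mul (sU k)).differentiable (by simp) q)] at key
  have e3 : ∀ k : Fin 3, fderiv ℝ (fun r => Uc u k r * Gf φ k r) q (ee i)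
      = Af u i k q * Gf φ k q + Uc u k q * fderiv ℝ (Gf φ i) q (ee k) := by
    intro k
    rw [dmul ((sU k).differentiable (by simp) q) ((sG k).differentiable (by simp) q)]
    rw [hAf]
    congr 1
    rw [show Gf φ k = fun r => fderiv ℝ (Fl φ) r (ee k) from rfl, dswap hφ,
      show (fun r => fderiv ℝ (Fl φ) r (ee i)) = Gf φ i from rfl]
  have e4 : ∀ k : Fin 3, fderiv ℝ (fun r => Uc u k r * Uc u k r) q (ee i)
      = Af u i k q * Uc u k q + Uc u k q * Af u i k q := by
    intro k
    rw [dmul ((sU k).differentiable (by simp) q) ((sU k).differentiable (by simp) q), hAf]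
  rw [Finset.sum_congr rfl (fun k _ => e3 k), Finset.sum_congr rfl (fun k _ => e4 k)] at key
  rw [show (fun r => fderiv ℝ (Fl φ) r (ee i)) = Gf φ i from rfl] at key
  rw [dlin (Gf φ i) q (u q.1 q.2)]
  simp only [hUc]
  rw [Finset.sum_add_distrib] at key
  have e5 : ∑ k : Fin 3, (Af u i k q * Uc u k q + Uc u k q * Af u i k q)
      = 2 * ∑ k : Fin 3, Uc u k q * Af u i k q := by
    rw [Finset.mul_sum]
    exact Finset.sum_congr rfl fun k _ => by ring
  rw [e5] at key
  linarith [key]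


def Hc (h : ℝ → ℝ) (ρ : ℝ → V3 → ℝ) : E3 → ℝ := fun q => h (Fl ρ q)

/-- The Ertel–Rossby scalar `(1/ρ)(∇×u)·v`, with `v = u − ∇φ` and Clebsch
potential `φ`, is a material invariant of barotropic compressible Euler flow. -/
theorem ertel_rossby_invariant_barotropic
    (u : ℝ → V3 → V3) (ρ φ : ℝ → V3 → ℝ) (P h : ℝ → ℝ)
    (hu : SmoothVec u) (hρ : SmoothS ρ) (hφ : SmoothS φ)
    (hP : ContDiff ℝ (⊤ : ℕ∞) P) (hh : ContDiff ℝ (⊤ : ℕ∞) h)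
    (hρpos : ∀ t x, 0 < ρ t x)
    (henthalpy : ∀ r : ℝ, 0 < r → deriv h r = deriv P r / r)
    (hmom : ∀ t x i, pt (comp u i) t x + (∑ j, u t x j * pd j (comp u i) t x)
      = -(1 / ρ t x) * deriv P (ρ t x) * pd i ρ t x)
    (hmass : ∀ t x, pt ρ t x + div3 (fun t x i => ρ t x * u t x i) t x = 0)
    (hφeq : ∀ t x, matD u φ t x = (1/2) * dot3 (u t x) (u t x) - h (ρ t x)) :
    ∀ t x, matD u
      (fun t x => (1 / ρ t x)
        * dot3 (curl3 u t x) (fun i => u t x i - pd i φ t x)) t x = 0 := by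
  intro t x
  have sU : ∀ i, ContDiff ℝ (⊤ : ℕ∞) (Uc u i) := sUc hu
  have hρ' : ContDiff ℝ (⊤ : ℕ∞) (Fl ρ) := hρ
  have hφ' : ContDiff ℝ (⊤ : ℕ∞) (Fl φ) := hφ
  have sH : ContDiff ℝ (⊤ : ℕ∞) (Hc h ρ) := hh.comp hρ'
  have sA : ∀ i j, ContDiff ℝ (⊤ : ℕ∞) (Af u i j) := fun i j => smooth_fd (sU j) (ee i)
  have sG : ∀ i, ContDiff ℝ (⊤ : ℕ∞) (Gf φ i) := fun i => smooth_fd hφ' (ee i)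
  have sV : ∀ i, ContDiff ℝ (⊤ : ℕ∞) (Vf u φ i) := fun i => (sU i).sub (sG i)
  have rne : ∀ q : E3, Fl ρ q ≠ 0 := fun q => (hρpos q.1 q.2).ne'
  -- enthalpy gradient
  have hHd : ∀ (q : E3) (i : Fin 3), fderiv ℝ (Hc h ρ) q (ee i)
      = deriv P (Fl ρ q) / Fl ρ q * fderiv ℝ (Fl ρ) q (ee i) := by
    intro q i
    rw [show Hc h ρ = fun r => h (Fl ρ r) from rfl,
      dcomp (hh.differentiable (by simp)) (hρ'.differentiable (by simp) q) (ee i),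
      henthalpy (Fl ρ q) (hρpos q.1 q.2)]
  -- momentum equation in enthalpy form
  have hmomH : ∀ (q : E3) (i : Fin 3),
      fderiv ℝ (Uc u i) q ((1:ℝ), u q.1 q.2) = - fderiv ℝ (Hc h ρ) q (ee i) := by
    intro q i
    have h1 : matD u (comp u i) q.1 q.2
        = -(1 / ρ q.1 q.2) * deriv P (ρ q.1 q.2) * pd i ρ q.1 q.2 := hmom q.1 q.2 i
    rw [matD_eq u (f := comp u i) (sU i), pd_eq hρ'] at h1
    have h2 : fderiv ℝ (Uc u i) q ((1:ℝ), u q.1 q.2)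
        = -(1 / Fl ρ q) * deriv P (Fl ρ q) * fderiv ℝ (Fl ρ) q (ee i) := h1
    rw [h2, hHd q i]; ring
  have hmomA := matA_eq u (Hc h ρ) hu sH hmomH
  -- Clebsch potential equation
  have hφE : ∀ q : E3, fderiv ℝ (Fl φ) q ((1:ℝ), u q.1 q.2)
      = (1/2) * (∑ k, Uc u k q * Uc u k q) - Hc h ρ q := by
    intro q
    have h1 := hφeq q.1 q.2
    rw [matD_eq u hφ'] at h1
    exact h1
  have hmatG := matG_eq u φ (Hc h ρ) hu hφ' sH hφE
  -- material derivative of v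
  have matV : ∀ (i : Fin 3) (q : E3), fderiv ℝ (Vf u φ i) q ((1:ℝ), u q.1 q.2)
      = - ∑ k, Af u i k q * Vf u φ k q := by
    intro i q
    rw [show Vf u φ i = fun r => Uc u i r - Gf φ i r from rfl,
      dsub ((sU i).differentiable (by simp) q) ((sG i).differentiable (by simp) q),
      hmomH q i, hmatG i q]
    simp only [Vf, Fin.sum_univ_three]
    ring
  -- mass conservation
  have matR : ∀ q : E3, fderiv ℝ (Fl ρ) q ((1:ℝ), u q.1 q.2)
      = - Fl ρ q * ∑ k, Af u k k q := by
    intro q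
    have h1 := hmass q.1 q.2
    rw [pt_eq hρ'] at h1
    have h2 : div3 (fun t x i => ρ t x * u t x i) q.1 q.2
        = ∑ k, (fderiv ℝ (Fl ρ) q (ee k) * Uc u k q + Fl ρ q * Af u k k q) := by
      rw [div3]
      refine Finset.sum_congr rfl fun k _ => ?_
      have hpd := pd_eq (f := comp (fun t x i => ρ t x * u t x i) k)
        (hρ'.mul (sU k)) k q.1 q.2
      rw [hpd]
      exact dmul (hρ'.differentiable (by simp) (q.1, q.2))
        ((sU k).differentiable (by simp) (q.1, q.2)) (ee k)
    rw [h2] at h1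
    rw [dlin (Fl ρ) q (u q.1 q.2)]
    have hUc : ∀ (r : E3) (k : Fin 3), u r.1 r.2 k = Uc u k r := fun _ _ => rfl
    simp only [hUc]
    rw [Finset.sum_add_distrib] at h1
    have e6 : ∑ k : Fin 3, fderiv ℝ (Fl ρ) q (ee k) * Uc u k q
        = ∑ k : Fin 3, Uc u k q * fderiv ℝ (Fl ρ) q (ee k) :=
      Finset.sum_congr rfl fun k _ => mul_comm _ _
    rw [e6] at h1
    have e7 : ∑ k : Fin 3, Fl ρ q * Af u k k q = Fl ρ q * ∑ k : Fin 3, Af u k k q :=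
      (Finset.mul_sum _ _ _).symm
    rw [e7] at h1
    linarith [h1]
  have matRinv : ∀ (t : ℝ) (x : V3),
      fderiv ℝ (fun r => (Fl ρ r)⁻¹) (t, x) ((1:ℝ), u t x)
      = (Fl ρ (t, x))⁻¹ * ∑ k, Af u k k (t, x) := by
    intro t x
    have h1 : fderiv ℝ (fun r => (Fl ρ r)⁻¹) (t, x) ((1:ℝ), u t x)
        = -((Fl ρ (t, x))^2)⁻¹ * fderiv ℝ (Fl ρ) (t, x) ((1:ℝ), u t x) :=
      dinv (hρ'.differentiable (by simp) (t, x)) (rne (t, x)) _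
    rw [h1, matR (t, x)]
    have := rne (t, x)
    field_simp
  have hmomA' : ∀ (i j : Fin 3) (t : ℝ) (x : V3),
      fderiv ℝ (Af u j i) (t, x) ((1:ℝ), u t x)
      = - fderiv ℝ (fun r => fderiv ℝ (Hc h ρ) r (ee i)) (t, x) (ee j)
        - ∑ k, Af u j k (t, x) * Af u k i (t, x) := fun i j t x => hmomA i j (t, x)
  have matV' : ∀ (i : Fin 3) (t : ℝ) (x : V3),
      fderiv ℝ (Vf u φ i) (t, x) ((1:ℝ), u t x)
      = - ∑ k, Af u i k (t, x) * Vf u φ k (t, x) := fun i t x => matV i (t, x)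
  have HHsym : ∀ (i j : Fin 3) (t : ℝ) (x : V3),
      fderiv ℝ (fun r => fderiv ℝ (Hc h ρ) r (ee i)) (t, x) (ee j)
      = fderiv ℝ (fun r => fderiv ℝ (Hc h ρ) r (ee j)) (t, x) (ee i) :=
    fun i j t x => dswap sH (t, x) (ee i) (ee j)
  -- rewrite the Ertel–Rossby scalar at the function level
  have hQf : (Fl (fun t x => (1 / ρ t x)
        * dot3 (curl3 u t x) (fun i => u t x i - pd i φ t x)))
      = fun q => (Fl ρ q)⁻¹ *
          ((Af u 1 2 q - Af u 2 1 q) * Vf u φ 0 q +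
           ((Af u 2 0 q - Af u 0 2 q) * Vf u φ 1 q +
            (Af u 0 1 q - Af u 1 0 q) * Vf u φ 2 q)) := by
    funext q
    show (1 / ρ q.1 q.2) * dot3 (curl3 u q.1 q.2) (fun i => u q.1 q.2 i - pd i φ q.1 q.2) = _
    rw [dot3, Fin.sum_univ_three, curl3]
    simp only [Matrix.cons_val_zero, Matrix.cons_val_one, Matrix.head_cons,
      Matrix.cons_val_two, Matrix.tail_cons]
    have eU : ∀ (m : Fin 3) (w : E3), fderiv ℝ (Fl (comp u m)) (q.1, q.2) w
        = fderiv ℝ (Uc u m) q w := fun _ _ => rfl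
    have eφ : ∀ (w : E3), fderiv ℝ (Fl φ) (q.1, q.2) w = fderiv ℝ (Fl φ) q w := fun _ => rfl
    simp only [pd_eq (f := comp u 0) (sU 0), pd_eq (f := comp u 1) (sU 1),
      pd_eq (f := comp u 2) (sU 2), pd_eq (f := φ) hφ', eU, eφ, one_div, Vf, Gf, Uc, Af, Fl]
    ring
  have sBig : ContDiff ℝ (⊤ : ℕ∞) (fun q : E3 =>
      (Af u 1 2 q - Af u 2 1 q) * Vf u φ 0 q +
      ((Af u 2 0 q - Af u 0 2 q) * Vf u φ 1 q +
       (Af u 0 1 q - Af u 1 0 q) * Vf u φ 2 q)) :=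
    (((sA 1 2).sub (sA 2 1)).mul (sV 0)).add
      ((((sA 2 0).sub (sA 0 2)).mul (sV 1)).add (((sA 0 1).sub (sA 1 0)).mul (sV 2)))
  have sQ : ContDiff ℝ (⊤ : ℕ∞) (Fl (fun t x => (1 / ρ t x)
      * dot3 (curl3 u t x) (fun i => u t x i - pd i φ t x))) := by
    rw [hQf]; exact (hρ'.inv rne).mul sBig
  rw [matD_eq u sQ t x, hQf]
  rw [dmul (F := fun q => (Fl ρ q)⁻¹) ((hρ'.inv rne).differentiable (by simp) (t, x)) (sBig.differentiable (by simp) (t, x))]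
  rw [matRinv t x]
  rw [dadd ((((sA 1 2).sub (sA 2 1)).mul (sV 0)).differentiable (by simp) (t, x))
      (((((sA 2 0).sub (sA 0 2)).mul (sV 1)).add
        (((sA 0 1).sub (sA 1 0)).mul (sV 2))).differentiable (by simp) (t, x)),
    dadd ((((sA 2 0).sub (sA 0 2)).mul (sV 1)).differentiable (by simp) (t, x))
      ((((sA 0 1).sub (sA 1 0)).mul (sV 2)).differentiable (by simp) (t, x)),
    dmul (((sA 1 2).sub (sA 2 1)).differentiable (by simp) (t, x))
      ((sV 0).differentiable (by simp) (t, x)),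
    dmul (((sA 2 0).sub (sA 0 2)).differentiable (by simp) (t, x))
      ((sV 1).differentiable (by simp) (t, x)),
    dmul (((sA 0 1).sub (sA 1 0)).differentiable (by simp) (t, x))
      ((sV 2).differentiable (by simp) (t, x)),
    dsub ((sA 1 2).differentiable (by simp) (t, x)) ((sA 2 1).differentiable (by simp) (t, x)),
    dsub ((sA 2 0).differentiable (by simp) (t, x)) ((sA 0 2).differentiable (by simp) (t, x)),
    dsub ((sA 0 1).differentiable (by simp) (t, x)) ((sA 1 0).differentiable (by simp) (t, x)),
    hmomA' 2 1 t x, hmomA' 1 2 t x, hmomA' 0 2 t x, hmomA' 2 0 t x,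
    hmomA' 1 0 t x, hmomA' 0 1 t x,
    matV' 0 t x, matV' 1 t x, matV' 2 t x,
    HHsym 1 2 t x, HHsym 2 0 t x, HHsym 0 1 t x]
  simp only [Fin.sum_univ_three]
  ring
end
end
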